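/- arXiv:2003.13133 — 4 statements merged into one kernel-verified Lean document; each statement's English description precedes it below -/
import Mathlib

section
/- Let κ₁ < κ₂ be real numbers and P, Q ∈ SO₃(ℝ). If γ ∈ 𝓟_{κ₁}^{κ₂}(P,Q), then κ₁ < inf_{t∈[0,1]} κ⁻_γ(t) ≤ sup_{t∈[0,1]} κ⁺_γ(t) < κ₂; that is, 𝓟_{κ₁}^{κ₂}(P,Q) ⊆ 𝓢_{κ₁}^{κ₂}(P,Q). -/
open MeasureTheory Real Set Filter Topology NNReal RealInnerProductSpace

noncomputable section

namespace Curves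

/-- `ℝ³` with the Euclidean inner product. -/
abbrev E3 : Type := EuclideanSpace ℝ (Fin 3)

/-- The cross product on `ℝ³`. -/
def cross (x y : E3) : E3 :=
  (EuclideanSpace.equiv (Fin 3) ℝ).symm
    ![x 1 * y 2 - x 2 * y 1, x 2 * y 0 - x 0 * y 2, x 0 * y 1 - x 1 * y 0]

/-- The intrinsic (angular) distance on the unit sphere `𝕊² ⊆ ℝ³`. -/
def sdist (x y : E3) : ℝ := Real.arccos (inner ℝ x y)

/-- `arccot : ℝ → (0, π)`. -/
def arccot (x : ℝ) : ℝ := π / 2 - Real.arctan x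

/-- A `C¹` regular curve with values in the unit sphere `𝕊²`, defined on the interval `[a, b]`,
recorded together with its (continuous, nonvanishing) derivative. -/
structure C1Curve (a b : ℝ) where
  toFun : ℝ → E3
  deriv : ℝ → E3
  mem_sphere : ∀ t ∈ Set.Icc a b, ‖toFun t‖ = 1
  hasDeriv : ∀ t ∈ Set.Icc a b, HasDerivWithinAt toFun (deriv t) (Set.Icc a b) t
  deriv_cont : ContinuousOn deriv (Set.Icc a b)
  regular : ∀ t ∈ Set.Icc a b, deriv t ≠ 0

variable {a b : ℝ}

/-- The unit tangent vector `𝐭_γ(t) = γ̇(t)/|γ̇(t)|`. -/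
def tangent (γ : C1Curve a b) (t : ℝ) : E3 := ‖γ.deriv t‖⁻¹ • γ.deriv t

/-- The unit normal vector `𝐧_γ(t) = γ(t) × 𝐭_γ(t)`. -/
def normal (γ : C1Curve a b) (t : ℝ) : E3 := cross (γ.toFun t) (tangent γ t)

/-- The length `L_γ` of the curve. -/
def clength (γ : C1Curve a b) : ℝ := ∫ t in a..b, ‖γ.deriv t‖

/-- The arc length function `s(t) = ∫_a^t |γ̇|`. -/
def arcLen (γ : C1Curve a b) (t : ℝ) : ℝ := ∫ u in a..t, ‖γ.deriv u‖

/-- The curve is parametrized by arc length. -/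
def UnitSpeed (γ : C1Curve a b) : Prop := ∀ t ∈ Set.Icc a b, ‖γ.deriv t‖ = 1

/-- The curve is parametrized with constant speed `|γ̇| ≡ L_γ`. -/
def ConstantSpeed (γ : C1Curve a b) : Prop := ∀ t ∈ Set.Icc a b, ‖γ.deriv t‖ = clength γ

/-- The circle of center `c ∈ 𝕊²` and spherical radius `r ∈ (0,π)`, oriented anticlockwise
about `c`, passes through `γ(t₁)` with the same unit tangent vector as `γ` there.
(The unit tangent of the anticlockwise circle at a point `x` on it is `(sin r)⁻¹ (c × x)`.) -/
def IsTangentCircleAt (γ : C1Curve a b) (t₁ : ℝ) (c : E3) (r : ℝ) : Prop :=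
  ‖c‖ = 1 ∧ r ∈ Set.Ioo 0 π ∧ sdist (γ.toFun t₁) c = r ∧
    tangent γ t₁ = (Real.sin r)⁻¹ • cross c (γ.toFun t₁)

/-- The circle of center `c` and radius `r` is tangent from the left to `γ` at `γ(t₁)`. -/
def TangentFromLeft (γ : C1Curve a b) (t₁ : ℝ) (c : E3) (r : ℝ) : Prop :=
  IsTangentCircleAt γ t₁ c r ∧
    ∃ δ > 0, ∀ t ∈ Set.Ioo (t₁ - δ) (t₁ + δ) ∩ Set.Icc a b, r ≤ sdist (γ.toFun t) c

/-- The circle of center `c` and radius `r` is tangent from the right to `γ` at `γ(t₁)`. -/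
def TangentFromRight (γ : C1Curve a b) (t₁ : ℝ) (c : E3) (r : ℝ) : Prop :=
  IsTangentCircleAt γ t₁ c r ∧
    ∃ δ > 0, ∀ t ∈ Set.Ioo (t₁ - δ) (t₁ + δ) ∩ Set.Icc a b, sdist (γ.toFun t) c ≤ r

/-- The upper curvature `κ⁺_γ(t)`: the infimum of `cot r` over all circles tangent from the
left to `γ` at `γ(t)` (with `inf ∅ = +∞`), as an extended real number. -/
def upperCurv (γ : C1Curve a b) (t : ℝ) : EReal :=
  sInf {x : EReal | ∃ c r, TangentFromLeft γ t c r ∧ x = ((Real.cot r : ℝ) : EReal)}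

/-- The lower curvature `κ⁻_γ(t)`: the supremum of `cot r` over all circles tangent from the
right to `γ` at `γ(t)` (with `sup ∅ = -∞`), as an extended real number. -/
def lowerCurv (γ : C1Curve a b) (t : ℝ) : EReal :=
  sSup {x : EReal | ∃ c r, TangentFromRight γ t c r ∧ x = ((Real.cot r : ℝ) : EReal)}

/-- The matrix with columns `x`, `y`, `z`. -/
def colMatrix (x y z : E3) : Matrix (Fin 3) (Fin 3) ℝ :=
  Matrix.of fun i j => ![x, y, z] j i

/-- The Frenet frame `𝔉_γ(t)`, the matrix with columns `γ(t)`, `𝐭_γ(t)`, `𝐧_γ(t)`. -/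
def frenet (γ : C1Curve a b) (t : ℝ) : Matrix (Fin 3) (Fin 3) ℝ :=
  colMatrix (γ.toFun t) (tangent γ t) (normal γ t)

/-- `SO₃(ℝ)`. -/
abbrev SO3 := Matrix.specialOrthogonalGroup (Fin 3) ℝ

/-- Lebesgue measure restricted to `[0,1]`. -/
def μ01 : Measure ℝ := volume.restrict (Set.Icc (0:ℝ) 1)

/-- Membership in `𝓘(P,Q)`: the Frenet frame equals `P` at `t = 0` and `Q` at `t = 1`. -/
def MemI (P Q : Matrix (Fin 3) (Fin 3) ℝ) (γ : C1Curve 0 1) : Prop :=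
  frenet γ 0 = P ∧ frenet γ 1 = Q

/-- `κ` is the a.e. geodesic curvature of `γ : [0,1] → 𝕊²`: almost everywhere the unit
tangent vector is differentiable with `d𝐭/dt = |γ̇| (-γ + κ 𝐧)`
(i.e. `𝐭' = -γ + κ𝐧` with respect to arc length). -/
def IsCurvature (γ : C1Curve 0 1) (κ : ℝ → ℝ) : Prop :=
  Measurable κ ∧
    ∀ᵐ t ∂μ01, HasDerivWithinAt (tangent γ)
      (‖γ.deriv t‖ • (-(γ.toFun t) + κ t • normal γ t)) (Set.Icc 0 1) t

/-- Membership in `𝓟_{κ₁}^{κ₂}(P,Q)`: `γ ∈ 𝓘(P,Q)`, `γ̇` is Lipschitz continuous, and the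
a.e. defined geodesic curvature `κ` satisfies `κ₁ < essinf κ ≤ esssup κ < κ₂`. -/
def MemP (κ₁ κ₂ : ℝ) (P Q : Matrix (Fin 3) (Fin 3) ℝ) (γ : C1Curve 0 1) : Prop :=
  MemI P Q γ ∧ (∃ K : ℝ≥0, LipschitzOnWith K γ.deriv (Set.Icc 0 1)) ∧
  ∃ κ : ℝ → ℝ, IsCurvature γ κ ∧
    (κ₁ : EReal) < essInf (fun t => ((κ t : ℝ) : EReal)) μ01 ∧
    essInf (fun t => ((κ t : ℝ) : EReal)) μ01 ≤ essSup (fun t => ((κ t : ℝ) : EReal)) μ01 ∧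
    essSup (fun t => ((κ t : ℝ) : EReal)) μ01 < (κ₂ : EReal)

/-- Membership in `𝓢_{κ₁}^{κ₂}(P,Q)`: `γ ∈ 𝓘(P,Q)` and
`κ₁ < inf_{t ∈ [0,1]} κ⁻_γ(t) ≤ sup_{t ∈ [0,1]} κ⁺_γ(t) < κ₂`. -/
def MemS (κ₁ κ₂ : ℝ) (P Q : Matrix (Fin 3) (Fin 3) ℝ) (γ : C1Curve 0 1) : Prop :=
  MemI P Q γ ∧
    (κ₁ : EReal) < (⨅ t : Set.Icc (0:ℝ) 1, lowerCurv γ ↑t) ∧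
    (⨅ t : Set.Icc (0:ℝ) 1, lowerCurv γ ↑t) ≤ (⨆ t : Set.Icc (0:ℝ) 1, upperCurv γ ↑t) ∧
    (⨆ t : Set.Icc (0:ℝ) 1, upperCurv γ ↑t) < (κ₂ : EReal)

/-- Pointwise two-sided curvature bounds `κ₁ < κ⁻_γ(t) ≤ κ⁺_γ(t) < κ₂` on the whole domain,
i.e. membership in `𝓛_{κ₁}^{κ₂}` (apart from the endpoint conditions). -/
def CurvBetween (κ₁ κ₂ : ℝ) (γ : C1Curve a b) : Prop :=
  ∀ t ∈ Set.Icc a b,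
    (κ₁ : EReal) < lowerCurv γ t ∧ lowerCurv γ t ≤ upperCurv γ t ∧
      upperCurv γ t < (κ₂ : EReal)

/-- The `C⁰` distance `d⁰(α,β) = max_t d(α(t), β(t))`. -/
def d0 (α β : C1Curve 0 1) : ℝ := ⨆ t : Set.Icc (0:ℝ) 1, sdist (α.toFun ↑t) (β.toFun ↑t)

/-- The `C¹` distance `d̄¹(α,β) = max_t [d(α(t),β(t)) + |α̇(t) - β̇(t)|]`. -/
def d1bar (α β : C1Curve 0 1) : ℝ :=
  ⨆ t : Set.Icc (0:ℝ) 1, (sdist (α.toFun ↑t) (β.toFun ↑t) + ‖α.deriv ↑t - β.deriv ↑t‖)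

/-- `h(t) = t - t⁻¹`, a diffeomorphism `(0,∞) → ℝ`. -/
def hfun (t : ℝ) : ℝ := t - t⁻¹

/-- The inverse of `h : (0,∞) → ℝ`. -/
def hInv (y : ℝ) : ℝ := Function.invFunOn hfun (Set.Ioi 0) y

/-- `h_{κ₁,κ₂}(t) = (κ₁ - t)⁻¹ + (κ₂ - t)⁻¹`, a diffeomorphism `(κ₁,κ₂) → ℝ`. -/
def hk (κ₁ κ₂ t : ℝ) : ℝ := (κ₁ - t)⁻¹ + (κ₂ - t)⁻¹

/-- The inverse of `h_{κ₁,κ₂} : (κ₁,κ₂) → ℝ`. -/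
def hkInv (κ₁ κ₂ y : ℝ) : ℝ := Function.invFunOn (hk κ₁ κ₂) (Set.Ioo κ₁ κ₂) y

/-- `(v, w)` is a `(κ₁,κ₂)`-strongly admissible pair of coefficients: `v = h⁻¹(v̂)` and
`w = v ⬝ h_{κ₁,κ₂}⁻¹(ŵ)` for some pair `(v̂, ŵ) ∈ L^∞[0,1] × L^∞[0,1]`; equivalently `v, w`
are measurable with `v > 0`, `w/v ∈ (κ₁,κ₂)`, and `h ∘ v` and `h_{κ₁,κ₂} ∘ (w/v)` are
bounded on `[0,1]`. -/
def StronglyAdmissiblePair (κ₁ κ₂ : ℝ) (v w : ℝ → ℝ) : Prop :=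
  Measurable v ∧ Measurable w ∧
  (∀ t, 0 < v t) ∧ (∀ t, w t / v t ∈ Set.Ioo κ₁ κ₂) ∧
  (∃ C : ℝ, ∀ t ∈ Set.Icc (0:ℝ) 1, |hfun (v t)| ≤ C) ∧
  (∃ C : ℝ, ∀ t ∈ Set.Icc (0:ℝ) 1, |hk κ₁ κ₂ (w t / v t)| ≤ C)

/-- The columns `f₁, f₂, f₃` form a Lipschitz (`W^{1,∞}`) solution of the frame ODE
`Φ' = Φ Λ` on `[0,1]`, where `Λ` has entries `Λ₁₂ = -v`, `Λ₂₁ = v`, `Λ₂₃ = -w`, `Λ₃₂ = w`. -/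
def FrameODE (v w : ℝ → ℝ) (f₁ f₂ f₃ : ℝ → E3) : Prop :=
  (∃ K : ℝ≥0, LipschitzOnWith K f₁ (Set.Icc 0 1)) ∧
  (∃ K : ℝ≥0, LipschitzOnWith K f₂ (Set.Icc 0 1)) ∧
  (∃ K : ℝ≥0, LipschitzOnWith K f₃ (Set.Icc 0 1)) ∧
  (∀ᵐ t ∂μ01,
    HasDerivWithinAt f₁ (v t • f₂ t) (Set.Icc 0 1) t ∧
    HasDerivWithinAt f₂ (-(v t) • f₁ t + w t • f₃ t) (Set.Icc 0 1) t ∧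
    HasDerivWithinAt f₃ (-(w t) • f₂ t) (Set.Icc 0 1) t)

/-- The `(κ₁,κ₂)`-strongly admissible parametrized curve `f = Φ e₁` corresponds to the pair
`(v̂, ŵ) ∈ ℝ × L^∞[0,1]` (with `v̂` constant), with frame solving `Φ' = ΦΛ`, `Φ(0) = P`,
`Φ(1) = Q`. -/
def Corr16 (κ₁ κ₂ : ℝ) (P Q : Matrix (Fin 3) (Fin 3) ℝ)
    (p : ℝ × Lp ℝ ⊤ μ01) (f : ℝ → E3) : Prop :=
  ∃ f₂ f₃ : ℝ → E3,
    FrameODE (fun _ => hInv p.1) (fun t => hInv p.1 * hkInv κ₁ κ₂ (p.2 t)) f f₂ f₃ ∧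
    colMatrix (f 0) (f₂ 0) (f₃ 0) = P ∧ colMatrix (f 1) (f₂ 1) (f₃ 1) = Q

/-- The set `B = {(v̂, ŵ) ∈ ℝ × L^∞[0,1] : Φ_{(v̂,ŵ)}(1) = Q}` (with `Φ_{(v̂,ŵ)}(0) = P`). -/
def BSet (κ₁ κ₂ : ℝ) (P Q : Matrix (Fin 3) (Fin 3) ℝ) : Set (ℝ × Lp ℝ ⊤ μ01) :=
  {p | ∃ f : ℝ → E3, Corr16 κ₁ κ₂ P Q p f}

end Curves

/-!
Near `γ t₁` the curve is compared with the circles of radius `r` tangent to it there; each has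
centre `c = cos r • γ t₁ + sin r • 𝐧 t₁`. If the geodesic curvature stays a.e. above a constant
larger than `cot r`, then `⟪γ, c⟫` has a local minimum at `t₁`, so the circle is tangent from the
right and `κ⁻_γ ≥ cot r`; symmetrically for `κ⁺_γ`. The a.e. information on `𝐭'` can be integrated
because `𝐭` is Lipschitz along with `γ̇`. Finally `κ⁻_γ ≤ κ⁺_γ`: a circle tangent from the right
with larger `cot` than one tangent from the left would trap `γ` near `t₁` between two discs meeting
only at `γ t₁`, making `γ` locally constant, against regularity.
-/

theorem norm_inv_norm_smul_sub_inv_norm_smul_le {E : Type*} [NormedAddCommGroup E]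
    [NormedSpace ℝ E] {x y : E} (hx : x ≠ 0) (hy : y ≠ 0) :
    ‖‖x‖⁻¹ • x - ‖y‖⁻¹ • y‖ ≤ 2 * ‖x‖⁻¹ * ‖x - y‖ := by
  have hx' : 0 < ‖x‖ := norm_pos_iff.2 hx
  have hy' : 0 < ‖y‖ := norm_pos_iff.2 hy
  have hsplit : ‖x‖⁻¹ • x - ‖y‖⁻¹ • y = ‖x‖⁻¹ • (x - y) + (‖x‖⁻¹ - ‖y‖⁻¹) • y := by
    rw [smul_sub, sub_smul]; abel
  have hnorms : |‖x‖⁻¹ - ‖y‖⁻¹| * ‖y‖ ≤ ‖x‖⁻¹ * ‖x - y‖ := by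
    have h : (‖x‖⁻¹ - ‖y‖⁻¹) * ‖y‖ = ‖x‖⁻¹ * (‖y‖ - ‖x‖) := by field_simp
    calc |‖x‖⁻¹ - ‖y‖⁻¹| * ‖y‖ = |(‖x‖⁻¹ - ‖y‖⁻¹) * ‖y‖| := by rw [abs_mul, abs_of_pos hy']
      _ = ‖x‖⁻¹ * |‖y‖ - ‖x‖| := by rw [h, abs_mul, abs_of_pos (inv_pos.2 hx')]
      _ ≤ ‖x‖⁻¹ * ‖x - y‖ := by
          gcongr; rw [norm_sub_rev]; exact abs_norm_sub_norm_le y x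
  calc ‖‖x‖⁻¹ • x - ‖y‖⁻¹ • y‖ ≤ ‖x‖⁻¹ * ‖x - y‖ + |‖x‖⁻¹ - ‖y‖⁻¹| * ‖y‖ := by
        rw [hsplit]
        refine (norm_add_le _ _).trans_eq ?_
        rw [norm_smul, norm_smul, Real.norm_of_nonneg (inv_nonneg.2 hx'.le), Real.norm_eq_abs]
    _ ≤ 2 * ‖x‖⁻¹ * ‖x - y‖ := by linarith

theorem LipschitzOnWith.inv_norm_smul {α E : Type*} [PseudoMetricSpace α] [NormedAddCommGroup E]
    [NormedSpace ℝ E] {f : α → E} {s : Set α} {K C : ℝ≥0} (hf : LipschitzOnWith K f s)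
    (hf₀ : ∀ x ∈ s, f x ≠ 0) (hC : ∀ x ∈ s, ‖f x‖⁻¹ ≤ C) :
    LipschitzOnWith (2 * C * K) (fun x => ‖f x‖⁻¹ • f x) s := by
  refine LipschitzOnWith.of_dist_le_mul fun x hx y hy => ?_
  rw [dist_eq_norm]
  calc ‖‖f x‖⁻¹ • f x - ‖f y‖⁻¹ • f y‖ ≤ 2 * ‖f x‖⁻¹ * dist (f x) (f y) := by
        rw [dist_eq_norm]; exact norm_inv_norm_smul_sub_inv_norm_smul_le (hf₀ x hx) (hf₀ y hy)
    _ ≤ 2 * C * (K * dist x y) := by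
        gcongr
        · exact hC x hx
        · exact hf.dist_le_mul x hx y hy
    _ = ↑(2 * C * K) * dist x y := by push_cast; ring

theorem AbsolutelyContinuousOnInterval.monotoneOn_of_ae_deriv_nonneg {g : ℝ → ℝ} {a b : ℝ}
    (hg : AbsolutelyContinuousOnInterval g a b) (hg' : ∀ᵐ t, t ∈ Ioo a b → 0 ≤ deriv g t) :
    MonotoneOn g (Icc a b) := by
  intro x hx y hy hxy
  have hxy_ab : uIcc x y ⊆ uIcc a b := by
    rw [uIcc_of_le hxy]; exact (Icc_subset_Icc hx.1 hy.2).trans Icc_subset_uIcc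
  rw [← sub_nonneg, ← (hg.mono hxy_ab).integral_deriv_eq_sub]
  refine intervalIntegral.integral_nonneg_of_ae_restrict hxy ?_
  rw [Filter.EventuallyLE, ← Measure.restrict_congr_set Ioo_ae_eq_Icc,
    ae_restrict_iff' measurableSet_Ioo]
  filter_upwards [hg'] with t ht htxy
  exact ht ⟨hx.1.trans_lt htxy.1, htxy.2.trans_le hy.2⟩

theorem isMinOn_Icc_of_hasDerivAt {F F' : ℝ → ℝ} {p q x : ℝ} (hx : x ∈ Icc p q)
    (hF : ContinuousOn F (Icc p q)) (hF' : ∀ t ∈ Ioo p q, HasDerivAt F (F' t) t)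
    (hleft : ∀ t ∈ Ioo p x, F' t ≤ 0) (hright : ∀ t ∈ Ioo x q, 0 ≤ F' t) :
    IsMinOn F (Icc p q) x := by
  have hanti : AntitoneOn F (Icc p x) := by
    refine antitoneOn_of_hasDerivWithinAt_nonpos (f' := F') (convex_Icc p x)
      (hF.mono (Icc_subset_Icc_right hx.2)) (fun t ht => ?_) (fun t ht => ?_)
    · rw [interior_Icc] at ht ⊢
      exact (hF' t ⟨ht.1, ht.2.trans_le hx.2⟩).hasDerivWithinAt
    · exact hleft t (by rwa [interior_Icc] at ht)
  have hmono : MonotoneOn F (Icc x q) := by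
    refine monotoneOn_of_hasDerivWithinAt_nonneg (f' := F') (convex_Icc x q)
      (hF.mono (Icc_subset_Icc_left hx.1)) (fun t ht => ?_) (fun t ht => ?_)
    · rw [interior_Icc] at ht ⊢
      exact (hF' t ⟨hx.1.trans_lt ht.1, ht.2⟩).hasDerivWithinAt
    · exact hright t (by rwa [interior_Icc] at ht)
  intro t ht
  rcases le_total t x with htx | hxt
  · exact hanti ⟨ht.1, htx⟩ ⟨hx.1, le_rfl⟩ htx
  · exact hmono ⟨le_rfl, hx.2⟩ ⟨hxt, ht.2⟩ hxt

theorem eventually_nhdsWithin_iff_exists_Ioo {s : Set ℝ} {x : ℝ} {P : ℝ → Prop} :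
    (∀ᶠ t in 𝓝[s] x, P t) ↔ ∃ δ > 0, ∀ t ∈ Ioo (x - δ) (x + δ) ∩ s, P t := by
  simp only [Filter.Eventually, Metric.mem_nhdsWithin_iff, Real.ball_eq_Ioo, subset_def,
    mem_ofPred_eq]

theorem exists_Icc_mem_nhdsWithin_Icc {a b x : ℝ} {s : Set ℝ} (hs : s ∈ 𝓝[Icc a b] x) :
    ∃ p q, Icc p q ⊆ Icc a b ∩ s ∧ Icc p q ∈ 𝓝[Icc a b] x := by
  obtain ⟨ε, hε, hball⟩ := Metric.mem_nhdsWithin_iff.1 hs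
  refine ⟨max a (x - ε / 2), min b (x + ε / 2), ?_, ?_⟩
  · rw [← Icc_inter_Icc]
    refine fun t ht => ⟨ht.1, hball ⟨?_, ht.1⟩⟩
    rw [Real.ball_eq_Ioo]
    exact ⟨by linarith [ht.2.1], by linarith [ht.2.2]⟩
  · rw [← Icc_inter_Icc]
    exact inter_mem_nhdsWithin _ (Icc_mem_nhds (by linarith) (by linarith))

namespace Curves

open Matrix

theorem cross_eq_toLp (x y : E3) : cross x y = WithLp.toLp 2 (x.ofLp ⨯₃ y.ofLp) := rfl

theorem inner_eq_dotProduct (x y : E3) : ⟪x, y⟫ = x.ofLp ⬝ᵥ y.ofLp := by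
  rw [EuclideanSpace.inner_eq_star_dotProduct, star_trivial, dotProduct_comm]

theorem inner_cross_self_left (x y : E3) : ⟪x, cross x y⟫ = 0 := by
  simp only [inner_eq_dotProduct, cross_eq_toLp, dot_self_cross]

theorem inner_cross_self_right (x y : E3) : ⟪y, cross x y⟫ = 0 := by
  simp only [inner_eq_dotProduct, cross_eq_toLp, dot_cross_self]

theorem inner_cross_left (x y z : E3) : ⟪cross x y, z⟫ = ⟪x, cross y z⟫ := by
  simp only [inner_eq_dotProduct, cross_eq_toLp]
  rw [dotProduct_comm, triple_product_permutation]

theorem inner_cross_cross (u v w x : E3) :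
    ⟪cross u v, cross w x⟫ = ⟪u, w⟫ * ⟪v, x⟫ - ⟪u, x⟫ * ⟪v, w⟫ := by
  simp only [inner_eq_dotProduct, cross_eq_toLp, cross_dot_cross]

theorem cross_cross (u v w : E3) : cross (cross u v) w = ⟪u, w⟫ • v - ⟪v, w⟫ • u := by
  simp only [inner_eq_dotProduct, cross_eq_toLp, cross_cross_eq_smul_sub_smul]
  rfl

theorem cross_self (x : E3) : cross x x = 0 := by
  simp only [cross_eq_toLp, _root_.cross_self]
  rfl

theorem cross_smul_add_smul_left (α β : ℝ) (u v w : E3) :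
    cross (α • u + β • v) w = α • cross u w + β • cross v w := by
  simp only [cross_eq_toLp]
  simp

theorem continuous_cross : Continuous fun p : E3 × E3 => cross p.1 p.2 := by
  simp only [cross_eq_toLp]
  fun_prop

theorem abs_inner_le_one {x c : E3} (hx : ‖x‖ = 1) (hc : ‖c‖ = 1) : |⟪x, c⟫| ≤ 1 := by
  simpa [hx, hc] using abs_real_inner_le_norm x c

namespace C1Curve

variable {a b t : ℝ} {γ : C1Curve a b}

theorem continuousOn_toFun : ContinuousOn γ.toFun (Icc a b) :=
  fun t ht => (γ.hasDeriv t ht).continuousWithinAt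

theorem norm_deriv_pos (ht : t ∈ Icc a b) : 0 < ‖γ.deriv t‖ :=
  norm_pos_iff.2 (γ.regular t ht)

theorem norm_smul_tangent (ht : t ∈ Icc a b) : ‖γ.deriv t‖ • tangent γ t = γ.deriv t := by
  rw [tangent, smul_smul, mul_inv_cancel₀ (norm_deriv_pos ht).ne', one_smul]

theorem norm_tangent (ht : t ∈ Icc a b) : ‖tangent γ t‖ = 1 := by
  rw [tangent, norm_smul, norm_inv, norm_norm, inv_mul_cancel₀ (norm_deriv_pos ht).ne']

theorem continuousOn_tangent : ContinuousOn (tangent γ) (Icc a b) :=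
  (γ.deriv_cont.norm.inv₀ fun _ ht => (norm_deriv_pos ht).ne').smul γ.deriv_cont

theorem continuousOn_normal : ContinuousOn (normal γ) (Icc a b) :=
  continuous_cross.comp_continuousOn (continuousOn_toFun.prodMk continuousOn_tangent)

theorem exists_lipschitzOnWith_tangent {K : ℝ≥0} (hK : LipschitzOnWith K γ.deriv (Icc a b)) :
    ∃ K', LipschitzOnWith K' (tangent γ) (Icc a b) := by
  obtain ⟨C, hC⟩ := isCompact_Icc.exists_bound_of_continuousOn
    (γ.deriv_cont.norm.inv₀ fun _ ht => (norm_deriv_pos ht).ne')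
  refine ⟨_, hK.inv_norm_smul (fun t ht => γ.regular t ht) (C := C.toNNReal) fun t ht => ?_⟩
  simpa using (hC t ht).trans (le_coe_toNNReal C)

theorem hasDerivWithinAt_inner_toFun (ht : t ∈ Icc a b) (c : E3) :
    HasDerivWithinAt (fun s => ⟪γ.toFun s, c⟫) (‖γ.deriv t‖ * ⟪tangent γ t, c⟫) (Icc a b) t :=
  ((γ.hasDeriv t ht).inner ℝ (hasDerivWithinAt_const t _ c)).congr_deriv <| by
    rw [inner_zero_right, zero_add]
    conv_lhs => rw [← norm_smul_tangent ht]
    exact real_inner_smul_left _ _ _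

theorem inner_toFun_deriv (hab : a < b) (ht : t ∈ Icc a b) : ⟪γ.toFun t, γ.deriv t⟫ = 0 := by
  have hconst : HasDerivWithinAt (fun s => ⟪γ.toFun s, γ.toFun s⟫) 0 (Icc a b) t :=
    (hasDerivWithinAt_const t _ (1 : ℝ)).congr
      (fun s hs => by rw [real_inner_self_eq_norm_sq, γ.mem_sphere s hs, one_pow])
      (by rw [real_inner_self_eq_norm_sq, γ.mem_sphere t ht, one_pow])
  have h := (uniqueDiffOn_Icc hab t ht).eq_deriv _
    ((γ.hasDeriv t ht).inner ℝ (γ.hasDeriv t ht)) hconst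
  rw [real_inner_comm (γ.toFun t)] at h
  linarith

theorem inner_toFun_tangent (hab : a < b) (ht : t ∈ Icc a b) : ⟪γ.toFun t, tangent γ t⟫ = 0 := by
  rw [tangent, real_inner_smul_right, inner_toFun_deriv hab ht, mul_zero]

theorem inner_toFun_normal : ⟪γ.toFun t, normal γ t⟫ = 0 := inner_cross_self_left _ _

theorem inner_tangent_normal : ⟪tangent γ t, normal γ t⟫ = 0 := inner_cross_self_right _ _

theorem norm_normal (hab : a < b) (ht : t ∈ Icc a b) : ‖normal γ t‖ = 1 := by
  have h := inner_cross_cross (γ.toFun t) (tangent γ t) (γ.toFun t) (tangent γ t)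
  rw [real_inner_self_eq_norm_sq, real_inner_self_eq_norm_sq, real_inner_self_eq_norm_sq,
    γ.mem_sphere t ht, norm_tangent ht, inner_toFun_tangent hab ht, real_inner_comm,
    inner_toFun_tangent hab ht] at h
  rw [normal]
  nlinarith [norm_nonneg (cross (γ.toFun t) (tangent γ t))]

theorem cross_normal_toFun (hab : a < b) (ht : t ∈ Icc a b) :
    cross (normal γ t) (γ.toFun t) = tangent γ t := by
  rw [normal, cross_cross, real_inner_self_eq_norm_sq, γ.mem_sphere t ht, real_inner_comm,
    inner_toFun_tangent hab ht]
  simp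

theorem not_eventually_toFun_eq (hab : a < b) (ht : t ∈ Icc a b) :
    ¬∀ᶠ s in 𝓝[Icc a b] t, γ.toFun s = γ.toFun t := fun h =>
  γ.regular t ht <| (uniqueDiffOn_Icc hab t ht).eq_deriv _ (γ.hasDeriv t ht)
    ((hasDerivWithinAt_const t _ (γ.toFun t)).congr_of_eventuallyEq h rfl)

end C1Curve

section Circles

variable {a b t r : ℝ} {γ : C1Curve a b}

/-- The centre of the circle of radius `r` tangent to `γ` at `γ t`: the point at distance `r`
from `γ t` along the geodesic leaving it in the direction `𝐧 t`. -/
def circleCenter (γ : C1Curve a b) (t r : ℝ) : E3 := cos r • γ.toFun t + sin r • normal γ t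

theorem inner_circleCenter (x : E3) :
    ⟪x, circleCenter γ t r⟫ = cos r * ⟪x, γ.toFun t⟫ + sin r * ⟪x, normal γ t⟫ := by
  rw [circleCenter, inner_add_right, real_inner_smul_right, real_inner_smul_right]

theorem inner_toFun_circleCenter (ht : t ∈ Icc a b) : ⟪γ.toFun t, circleCenter γ t r⟫ = cos r := by
  rw [inner_circleCenter, real_inner_self_eq_norm_sq, γ.mem_sphere t ht,
    C1Curve.inner_toFun_normal]
  ring

theorem inner_tangent_circleCenter (hab : a < b) (ht : t ∈ Icc a b) :
    ⟪tangent γ t, circleCenter γ t r⟫ = 0 := by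
  rw [inner_circleCenter, real_inner_comm, C1Curve.inner_toFun_tangent hab ht,
    C1Curve.inner_tangent_normal]
  ring

theorem inner_normal_circleCenter (hab : a < b) (ht : t ∈ Icc a b) :
    ⟪normal γ t, circleCenter γ t r⟫ = sin r := by
  rw [inner_circleCenter, real_inner_comm, C1Curve.inner_toFun_normal,
    real_inner_self_eq_norm_sq, C1Curve.norm_normal hab ht]
  ring

theorem norm_circleCenter (hab : a < b) (ht : t ∈ Icc a b) : ‖circleCenter γ t r‖ = 1 := by
  have h : ⟪circleCenter γ t r, circleCenter γ t r⟫ = 1 := by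
    rw [inner_circleCenter, real_inner_comm (γ.toFun t), real_inner_comm (normal γ t),
      inner_toFun_circleCenter ht, inner_normal_circleCenter hab ht, ← sq, ← sq,
      cos_sq_add_sin_sq]
  rw [real_inner_self_eq_norm_sq] at h
  nlinarith [norm_nonneg (circleCenter γ t r)]

theorem isTangentCircleAt_circleCenter (hab : a < b) (ht : t ∈ Icc a b) (hr : r ∈ Ioo 0 π) :
    IsTangentCircleAt γ t (circleCenter γ t r) r := by
  refine ⟨norm_circleCenter hab ht, hr, ?_, ?_⟩
  · rw [sdist, inner_toFun_circleCenter ht, arccos_cos hr.1.le hr.2.le]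
  · rw [circleCenter, cross_smul_add_smul_left, cross_self, C1Curve.cross_normal_toFun hab ht,
      smul_zero, zero_add, smul_smul, inv_mul_cancel₀ (sin_pos_of_pos_of_lt_pi hr.1 hr.2).ne',
      one_smul]

/-- The centre `c` has components `cos r` and `sin r` along `γ t` and `𝐧 t`, so the unit vectors
`c` and `circleCenter γ t r` have inner product `1`. -/
theorem IsTangentCircleAt.eq_circleCenter {c : E3} (hab : a < b) (ht : t ∈ Icc a b)
    (h : IsTangentCircleAt γ t c r) : c = circleCenter γ t r := by
  obtain ⟨hc, hr, hdist, htangent⟩ := h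
  have hsin : 0 < sin r := sin_pos_of_pos_of_lt_pi hr.1 hr.2
  have hγc : ⟪γ.toFun t, c⟫ = cos r := by
    obtain ⟨hlo, hhi⟩ := abs_le.1 (abs_inner_le_one (γ.mem_sphere t ht) hc)
    rw [← hdist, sdist, cos_arccos hlo hhi]
  have hnc : ⟪normal γ t, c⟫ = sin r := by
    have h1 : ⟪tangent γ t, (sin r)⁻¹ • cross c (γ.toFun t)⟫ = 1 := by
      rw [← htangent, real_inner_self_eq_norm_sq, C1Curve.norm_tangent ht, one_pow]
    rw [real_inner_smul_right, real_inner_comm, inner_cross_left] at h1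
    rw [real_inner_comm]
    exact ((inv_mul_eq_one₀ hsin.ne').1 h1).symm
  refine (inner_eq_one_iff_of_norm_eq_one (𝕜 := ℝ) hc (norm_circleCenter hab ht)).1 ?_
  rw [inner_circleCenter, real_inner_comm (γ.toFun t), real_inner_comm (normal γ t), hγc, hnc,
    ← sq, ← sq, cos_sq_add_sin_sq]

end Circles

section Tangency

variable {a b t r : ℝ} {c x : E3} {γ : C1Curve a b}

theorem sdist_le_iff (hx : ‖x‖ = 1) (hc : ‖c‖ = 1) (hr₀ : 0 ≤ r) (hrπ : r ≤ π) :
    sdist x c ≤ r ↔ cos r ≤ ⟪x, c⟫ := by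
  obtain ⟨hlo, hhi⟩ := abs_le.1 (abs_inner_le_one hx hc)
  rw [sdist]
  refine ⟨fun h => ?_, fun h => ?_⟩
  · simpa [cos_arccos hlo hhi] using cos_le_cos_of_nonneg_of_le_pi (arccos_nonneg _) hrπ h
  · simpa [arccos_cos hr₀ hrπ] using arccos_le_arccos h

theorem le_sdist_iff (hx : ‖x‖ = 1) (hc : ‖c‖ = 1) (hr₀ : 0 ≤ r) (hrπ : r ≤ π) :
    r ≤ sdist x c ↔ ⟪x, c⟫ ≤ cos r := by
  obtain ⟨hlo, hhi⟩ := abs_le.1 (abs_inner_le_one hx hc)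
  rw [sdist]
  refine ⟨fun h => ?_, fun h => ?_⟩
  · simpa [cos_arccos hlo hhi] using cos_le_cos_of_nonneg_of_le_pi hr₀ (arccos_le_pi _) h
  · simpa [arccos_cos hr₀ hrπ] using arccos_le_arccos h

theorem tangentFromLeft_iff : TangentFromLeft γ t c r ↔
    IsTangentCircleAt γ t c r ∧ ∀ᶠ s in 𝓝[Icc a b] t, r ≤ sdist (γ.toFun s) c := by
  rw [TangentFromLeft, eventually_nhdsWithin_iff_exists_Ioo]

theorem tangentFromRight_iff : TangentFromRight γ t c r ↔
    IsTangentCircleAt γ t c r ∧ ∀ᶠ s in 𝓝[Icc a b] t, sdist (γ.toFun s) c ≤ r := by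
  rw [TangentFromRight, eventually_nhdsWithin_iff_exists_Ioo]

end Tangency

/-- For `M = ⟪x, γ t⟫` and `Y = ⟪x, 𝐧 t⟫`: a point `x` inside the tangent circle of radius `ρ` and
outside the one of radius `r`, which has smaller `cot`, can only be `γ t` itself. -/
theorem one_le_of_cot_lt_cot {ρ r M Y : ℝ} (hρ : 0 < sin ρ) (hr : 0 < sin r) (hcot : cot r < cot ρ)
    (hinner : cos ρ ≤ cos ρ * M + sin ρ * Y) (houter : cos r * M + sin r * Y ≤ cos r) :
    1 ≤ M := by
  rw [cot_eq_cos_div_sin, cot_eq_cos_div_sin, div_lt_div_iff₀ hr hρ] at hcot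
  nlinarith [mul_le_mul_of_nonneg_left hinner hr.le, mul_le_mul_of_nonneg_left houter hρ.le]

theorem cot_le_cot_of_tangentFromRight_of_tangentFromLeft {a b t ρ r : ℝ} {γ : C1Curve a b}
    {c c' : E3} (hab : a < b) (ht : t ∈ Icc a b) (hR : TangentFromRight γ t c ρ)
    (hL : TangentFromLeft γ t c' r) : cot ρ ≤ cot r := by
  obtain ⟨hRc, hRev⟩ := tangentFromRight_iff.1 hR
  obtain ⟨hLc, hLev⟩ := tangentFromLeft_iff.1 hL
  have hρ := hRc.2.1
  have hr := hLc.2.1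
  rw [hRc.eq_circleCenter hab ht] at hRev
  rw [hLc.eq_circleCenter hab ht] at hLev
  by_contra! hcot
  refine γ.not_eventually_toFun_eq hab ht ?_
  filter_upwards [hRev, hLev, self_mem_nhdsWithin] with s hsR hsL hs
  rw [sdist_le_iff (γ.mem_sphere s hs) (norm_circleCenter hab ht) hρ.1.le hρ.2.le,
    inner_circleCenter] at hsR
  rw [le_sdist_iff (γ.mem_sphere s hs) (norm_circleCenter hab ht) hr.1.le hr.2.le,
    inner_circleCenter] at hsL
  refine (inner_eq_one_iff_of_norm_eq_one (𝕜 := ℝ) (γ.mem_sphere s hs) (γ.mem_sphere t ht)).1 ?_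
  refine le_antisymm ?_ (one_le_of_cot_lt_cot (sin_pos_of_pos_of_lt_pi hρ.1 hρ.2)
    (sin_pos_of_pos_of_lt_pi hr.1 hr.2) hcot hsR hsL)
  simpa [γ.mem_sphere s hs, γ.mem_sphere t ht] using real_inner_le_norm (γ.toFun s) (γ.toFun t)

theorem lowerCurv_le_upperCurv {a b t : ℝ} {γ : C1Curve a b} (hab : a < b) (ht : t ∈ Icc a b) :
    lowerCurv γ t ≤ upperCurv γ t := by
  refine sSup_le ?_
  rintro _ ⟨c, ρ, hR, rfl⟩
  refine le_sInf ?_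
  rintro _ ⟨c', r, hL, rfl⟩
  exact EReal.coe_le_coe_iff.2 (cot_le_cot_of_tangentFromRight_of_tangentFromLeft hab ht hR hL)

theorem IsCurvature.ae_hasDerivWithinAt_inner_tangent {γ : C1Curve 0 1} {κ : ℝ → ℝ}
    (hκ : IsCurvature γ κ) (c : E3) :
    ∀ᵐ t ∂μ01, HasDerivWithinAt (fun s => ⟪tangent γ s, c⟫)
      (‖γ.deriv t‖ * (-⟪γ.toFun t, c⟫ + κ t * ⟪normal γ t, c⟫)) (Icc 0 1) t := by
  filter_upwards [hκ.2] with t ht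
  refine (ht.inner ℝ (hasDerivWithinAt_const t _ c)).congr_deriv ?_
  rw [inner_zero_right, zero_add, real_inner_smul_left, inner_add_left, inner_neg_left,
    real_inner_smul_left]

theorem eventually_inner_normal_pos_and_mul_div_lt {a b σ r k t₁ : ℝ} {γ : C1Curve a b}
    (hab : a < b) (hr : r ∈ Ioo 0 π) (hk : σ * cot r < k) (ht₁ : t₁ ∈ Icc a b) :
    ∀ᶠ t in 𝓝[Icc a b] t₁, 0 < ⟪normal γ t, circleCenter γ t₁ r⟫ ∧
      σ * (⟪γ.toFun t, circleCenter γ t₁ r⟫ / ⟪normal γ t, circleCenter γ t₁ r⟫) < k := by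
  set c := circleCenter γ t₁ r
  have hγc : ⟪γ.toFun t₁, c⟫ = cos r := inner_toFun_circleCenter ht₁
  have hnc : ⟪normal γ t₁, c⟫ = sin r := inner_normal_circleCenter hab ht₁
  have hsin : 0 < sin r := sin_pos_of_pos_of_lt_pi hr.1 hr.2
  have hn : ContinuousWithinAt (fun t => ⟪normal γ t, c⟫) (Icc a b) t₁ :=
    C1Curve.continuousOn_normal.inner continuousOn_const t₁ ht₁
  have hf : ContinuousWithinAt (fun t => ⟪γ.toFun t, c⟫) (Icc a b) t₁ :=
    C1Curve.continuousOn_toFun.inner continuousOn_const t₁ ht₁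
  refine (hn.eventually (eventually_gt_nhds ?_)).and
    (((hf.div hn ?_).const_mul σ).eventually (eventually_lt_nhds ?_))
  · show 0 < ⟪normal γ t₁, c⟫
    rwa [hnc]
  · rw [hnc]
    exact hsin.ne'
  · show σ * (⟪γ.toFun t₁, c⟫ / ⟪normal γ t₁, c⟫) < k
    rwa [hγc, hnc, ← cot_eq_cos_div_sin]

/-- `⟪𝐭, c⟫` has derivative `|γ̇| ⟪𝐧, c⟫ (κ - ⟪γ, c⟫ / ⟪𝐧, c⟫)` a.e., and is Lipschitz. -/
theorem monotoneOn_mul_inner_tangent {γ : C1Curve 0 1} {κ : ℝ → ℝ} {K : ℝ≥0}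
    (hLip : LipschitzOnWith K γ.deriv (Icc 0 1)) (hκ : IsCurvature γ κ) {σ k p q : ℝ} {c : E3}
    (hp : 0 ≤ p) (hq : q ≤ 1) (hκk : ∀ᵐ t ∂μ01, k ≤ σ * κ t)
    (hside : ∀ t ∈ Icc p q,
      0 < ⟪normal γ t, c⟫ ∧ σ * (⟪γ.toFun t, c⟫ / ⟪normal γ t, c⟫) < k) :
    MonotoneOn (fun t => σ * ⟪tangent γ t, c⟫) (Icc p q) := by
  rcases le_total p q with hpq | hqp
  swap
  · exact (subsingleton_Icc_of_ge hqp).monotoneOn _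
  refine AbsolutelyContinuousOnInterval.monotoneOn_of_ae_deriv_nonneg ?_ ?_
  · obtain ⟨K', hK'⟩ := C1Curve.exists_lipschitzOnWith_tangent hLip
    have hlip := (innerSL ℝ c).lipschitz.comp_lipschitzOnWith
      (hK'.mono (uIcc_subset_Icc ⟨hp, hpq.trans hq⟩ ⟨hp.trans hpq, hq⟩))
    convert hlip.absolutelyContinuousOnInterval.const_mul σ using 3
    exact real_inner_comm _ _
  · have hd := hκ.ae_hasDerivWithinAt_inner_tangent c
    rw [μ01, ae_restrict_iff' measurableSet_Icc] at hd hκk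
    filter_upwards [hd, hκk] with t hdt hkt ht
    have ht01 : t ∈ Ioo (0 : ℝ) 1 := ⟨hp.trans_lt ht.1, ht.2.trans_le hq⟩
    obtain ⟨hpos, hlt⟩ := hside t (Ioo_subset_Icc_self ht)
    have hsplit : σ * (-⟪γ.toFun t, c⟫ + κ t * ⟪normal γ t, c⟫) =
        ⟪normal γ t, c⟫ * (σ * κ t - σ * (⟪γ.toFun t, c⟫ / ⟪normal γ t, c⟫)) := by
      field_simp
      ring
    rw [(((hdt (Ioo_subset_Icc_self ht01)).hasDerivAt
      (Icc_mem_nhds ht01.1 ht01.2)).const_mul σ).deriv, mul_left_comm, hsplit]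
    have hκt := hkt (Ioo_subset_Icc_self ht01)
    exact mul_nonneg (norm_nonneg _) (mul_nonneg hpos.le (by linarith))

/-- Local comparison with the circle of radius `r`: `σ = 1` gives the side of curvature above
`cot r`, `σ = -1` the side below. `σ ⟪𝐭, c⟫` is monotone near `t₁` and vanishes there, so
`σ ⟪γ, c⟫`, with derivative `|γ̇| σ ⟪𝐭, c⟫`, has a minimum at `t₁`. -/
theorem eventually_mul_cos_le_mul_inner_circleCenter {γ : C1Curve 0 1} {κ : ℝ → ℝ} {K : ℝ≥0}
    (hLip : LipschitzOnWith K γ.deriv (Icc 0 1)) (hκ : IsCurvature γ κ) {σ r k t₁ : ℝ}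
    (hr : r ∈ Ioo 0 π) (hk : σ * cot r < k) (hκk : ∀ᵐ t ∂μ01, k ≤ σ * κ t)
    (ht₁ : t₁ ∈ Icc (0 : ℝ) 1) :
    ∀ᶠ t in 𝓝[Icc 0 1] t₁, σ * cos r ≤ σ * ⟪γ.toFun t, circleCenter γ t₁ r⟫ := by
  set c := circleCenter γ t₁ r
  obtain ⟨p, q, hJ, hJnhds⟩ := exists_Icc_mem_nhdsWithin_Icc
    (eventually_inner_normal_pos_and_mul_div_lt zero_lt_one hr hk ht₁)
  have ht₁J : t₁ ∈ Icc p q := mem_of_mem_nhdsWithin ht₁ hJnhds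
  obtain ⟨hp, hq⟩ := (Icc_subset_Icc_iff (ht₁J.1.trans ht₁J.2)).1 fun t ht => (hJ ht).1
  have hmono : MonotoneOn (fun t => σ * ⟪tangent γ t, c⟫) (Icc p q) :=
    monotoneOn_mul_inner_tangent hLip hκ hp hq hκk fun t ht => (hJ ht).2
  have htc : ⟪tangent γ t₁, c⟫ = 0 := inner_tangent_circleCenter zero_lt_one ht₁
  have hmin : IsMinOn (fun t => σ * ⟪γ.toFun t, c⟫) (Icc p q) t₁ := by
    refine isMinOn_Icc_of_hasDerivAt (F' := fun t => ‖γ.deriv t‖ * (σ * ⟪tangent γ t, c⟫))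
      ht₁J ?_ (fun t ht => ?_) (fun t ht => ?_) (fun t ht => ?_)
    · exact (continuousOn_const.mul (C1Curve.continuousOn_toFun.inner continuousOn_const)).mono
        (Icc_subset_Icc hp hq)
    · have ht01 : t ∈ Icc (0 : ℝ) 1 := ⟨hp.trans ht.1.le, ht.2.le.trans hq⟩
      exact (((C1Curve.hasDerivWithinAt_inner_toFun ht01 c).hasDerivAt
        (Icc_mem_nhds (hp.trans_lt ht.1) (ht.2.trans_le hq))).const_mul σ).congr_deriv (by ring)
    · refine mul_nonpos_of_nonneg_of_nonpos (norm_nonneg _) ?_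
      simpa [htc] using hmono ⟨ht.1.le, ht.2.le.trans ht₁J.2⟩ ht₁J ht.2.le
    · refine mul_nonneg (norm_nonneg _) ?_
      simpa [htc] using hmono ht₁J ⟨ht₁J.1.trans ht.1.le, ht.2.le⟩ ht.1.le
  filter_upwards [hJnhds] with t ht
  rw [← inner_toFun_circleCenter ht₁]
  exact hmin ht

theorem arccot_mem_Ioo (x : ℝ) : arccot x ∈ Ioo 0 π := by
  obtain ⟨h₁, h₂⟩ := arctan_mem_Ioo x
  exact ⟨by rw [arccot]; linarith, by rw [arccot]; linarith [Real.pi_pos]⟩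

theorem cot_arccot (x : ℝ) : cot (arccot x) = x := by
  rw [arccot, cot_eq_cos_div_sin, cos_pi_div_two_sub, sin_pi_div_two_sub, ← tan_eq_sin_div_cos,
    tan_arctan]

section CurvatureBounds

variable {γ : C1Curve 0 1} {κ : ℝ → ℝ} {K : ℝ≥0} {ρ t : ℝ}

theorem coe_le_lowerCurv_of_lt_essInf (hLip : LipschitzOnWith K γ.deriv (Icc 0 1))
    (hκ : IsCurvature γ κ) (hρ : (ρ : EReal) < essInf (fun s => ((κ s : ℝ) : EReal)) μ01)
    (ht : t ∈ Icc (0 : ℝ) 1) : (ρ : EReal) ≤ lowerCurv γ t := by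
  obtain ⟨k, hρk, hk⟩ := EReal.exists_between_coe_real hρ
  have hκk : ∀ᵐ s ∂μ01, k ≤ 1 * κ s := by
    filter_upwards [ae_lt_of_lt_essInf hk] with s hs
    rw [one_mul]
    exact_mod_cast hs.le
  have hr := arccot_mem_Ioo ρ
  have hcot : 1 * cot (arccot ρ) < k := by
    rwa [one_mul, cot_arccot, ← EReal.coe_lt_coe_iff]
  have hR : TangentFromRight γ t (circleCenter γ t (arccot ρ)) (arccot ρ) := by
    refine tangentFromRight_iff.2 ⟨isTangentCircleAt_circleCenter zero_lt_one ht hr, ?_⟩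
    filter_upwards [eventually_mul_cos_le_mul_inner_circleCenter hLip hκ hr hcot hκk ht,
      self_mem_nhdsWithin] with s hs hs01
    rw [one_mul, one_mul] at hs
    exact (sdist_le_iff (γ.mem_sphere s hs01) (norm_circleCenter zero_lt_one ht) hr.1.le
      hr.2.le).2 hs
  exact le_sSup ⟨_, _, hR, by rw [cot_arccot]⟩

theorem upperCurv_le_coe_of_essSup_lt (hLip : LipschitzOnWith K γ.deriv (Icc 0 1))
    (hκ : IsCurvature γ κ) (hρ : essSup (fun s => ((κ s : ℝ) : EReal)) μ01 < ρ)
    (ht : t ∈ Icc (0 : ℝ) 1) : upperCurv γ t ≤ ρ := by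
  obtain ⟨k, hk, hkρ⟩ := EReal.exists_between_coe_real hρ
  have hκk : ∀ᵐ s ∂μ01, -k ≤ -1 * κ s := by
    filter_upwards [ae_lt_of_essSup_lt hk] with s hs
    rw [neg_one_mul, neg_le_neg_iff]
    exact_mod_cast hs.le
  have hr := arccot_mem_Ioo ρ
  have hcot : -1 * cot (arccot ρ) < -k := by
    rwa [neg_one_mul, cot_arccot, neg_lt_neg_iff, ← EReal.coe_lt_coe_iff]
  have hL : TangentFromLeft γ t (circleCenter γ t (arccot ρ)) (arccot ρ) := by
    refine tangentFromLeft_iff.2 ⟨isTangentCircleAt_circleCenter zero_lt_one ht hr, ?_⟩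
    filter_upwards [eventually_mul_cos_le_mul_inner_circleCenter hLip hκ hr hcot hκk ht,
      self_mem_nhdsWithin] with s hs hs01
    rw [neg_one_mul, neg_one_mul, neg_le_neg_iff] at hs
    exact (le_sdist_iff (γ.mem_sphere s hs01) (norm_circleCenter zero_lt_one ht) hr.1.le
      hr.2.le).2 hs
  exact sInf_le ⟨_, _, hL, by rw [cot_arccot]⟩

end CurvatureBounds

theorem stmt_1_general (κ₁ κ₂ : ℝ) (P Q : SO3) (γ : C1Curve 0 1)
    (hγ : MemP κ₁ κ₂ (P : Matrix (Fin 3) (Fin 3) ℝ) (Q : Matrix (Fin 3) (Fin 3) ℝ) γ) :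
    MemS κ₁ κ₂ (P : Matrix (Fin 3) (Fin 3) ℝ) (Q : Matrix (Fin 3) (Fin 3) ℝ) γ := by
  obtain ⟨hI, ⟨K, hLip⟩, κ, hκ, hlow, -, hhigh⟩ := hγ
  obtain ⟨ρ₁, hκ₁ρ₁, hρ₁⟩ := EReal.exists_between_coe_real hlow
  obtain ⟨ρ₂, hρ₂, hρ₂κ₂⟩ := EReal.exists_between_coe_real hhigh
  have h0 : (0 : ℝ) ∈ Icc (0 : ℝ) 1 := left_mem_Icc.2 zero_le_one
  refine ⟨hI, ?_, ?_, ?_⟩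
  · exact hκ₁ρ₁.trans_le (le_iInf fun t => coe_le_lowerCurv_of_lt_essInf hLip hκ hρ₁ t.2)
  · exact iInf_le_of_le ⟨0, h0⟩ (le_iSup_of_le ⟨0, h0⟩ (lowerCurv_le_upperCurv zero_lt_one h0))
  · exact (iSup_le fun t => upperCurv_le_coe_of_essSup_lt hLip hκ hρ₂ t.2).trans_lt hρ₂κ₂

/-- `𝓟_{κ₁}^{κ₂}(P,Q) ⊆ 𝓢_{κ₁}^{κ₂}(P,Q)`: if `γ ∈ 𝓟_{κ₁}^{κ₂}(P,Q)` then
`κ₁ < inf_{t∈[0,1]} κ⁻_γ(t) ≤ sup_{t∈[0,1]} κ⁺_γ(t) < κ₂`. -/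
theorem stmt_1 (κ₁ κ₂ : ℝ) (h12 : κ₁ < κ₂) (P Q : SO3) (γ : C1Curve 0 1)
    (hγ : MemP κ₁ κ₂ (P : Matrix (Fin 3) (Fin 3) ℝ) (Q : Matrix (Fin 3) (Fin 3) ℝ) γ) :
    MemS κ₁ κ₂ (P : Matrix (Fin 3) (Fin 3) ℝ) (Q : Matrix (Fin 3) (Fin 3) ℝ) γ :=
  stmt_1_general κ₁ κ₂ P Q γ hγ

end Curves
end
end

section
/- Let γ : I → 𝕊² be a C¹ regular curve parametrized by arc length, let s₀ ∈ I, and let ρ ∈ (0,π) satisfy κ⁺_γ(s₀) < cot ρ. Set 𝐯 = (cos ρ)γ(s₀) + (sin ρ)𝐧_γ(s₀). Then there exists σ > 0 such that d(𝐯, γ(s)) ≥ ρ for all s ∈ (s₀−σ, s₀+σ) ∩ I. -/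
/-! Since `cot` is decreasing on `(0, π)`, `κ⁺_γ(s₀) < cot ρ` yields a circle of center `c` and
radius `r > ρ` tangent from the left at `γ(s₀)`. Both `c` and `𝐯` lie on the geodesic leaving
`γ(s₀)` in the direction `𝐧_γ(s₀)`, at distances `r` and `ρ`, so `d(𝐯, c) = r - ρ`. Near `s₀` the
curve stays outside the circle, `d(γ(s), c) ≥ r`, and the triangle inequality
`d(γ(s), c) ≤ d(γ(s), 𝐯) + d(𝐯, c)` gives `d(𝐯, γ(s)) ≥ ρ`. -/

open MeasureTheory Real Set Filter Topology NNReal RealInnerProductSpace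

noncomputable section

namespace Curves

theorem strictAntiOn_cot : StrictAntiOn cot (Ioo 0 π) := by
  intro x hx y hy hxy
  have hsx : 0 < sin x := Real.sin_pos_of_pos_of_lt_pi hx.1 hx.2
  have hsy : 0 < sin y := Real.sin_pos_of_pos_of_lt_pi hy.1 hy.2
  have hs : 0 < sin (y - x) :=
    Real.sin_pos_of_pos_of_lt_pi (by linarith) (by linarith [hx.1, hy.2])
  rw [Real.cot_eq_cos_div_sin, Real.cot_eq_cos_div_sin, div_lt_div_iff₀ hsy hsx]
  rw [Real.sin_sub] at hs
  linarith

section GreatCircle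

variable {V : Type*} [NormedAddCommGroup V] [InnerProductSpace ℝ V]

theorem norm_cos_smul_add_sin_smul {x n : V} (hx : ‖x‖ = 1) (hn : ‖n‖ = 1) (hxn : ⟪x, n⟫ = 0)
    (θ : ℝ) : ‖cos θ • x + sin θ • n‖ = 1 := by
  have hxx : ⟪x, x⟫ = 1 := by simp [hx]
  have hnn : ⟪n, n⟫ = 1 := by simp [hn]
  have hsq : ‖cos θ • x + sin θ • n‖ ^ 2 = 1 := by
    rw [← real_inner_self_eq_norm_sq]
    simp only [inner_add_left, inner_add_right, real_inner_smul_left, real_inner_smul_right,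
      hxx, hnn, hxn, real_inner_comm x n]
    linear_combination Real.sin_sq_add_cos_sq θ
  exact (pow_eq_one_iff_of_nonneg (norm_nonneg _) two_ne_zero).mp hsq

/-- For unit vectors `x`, `c` at angle `r`, the unit vector at `x` tangent to the great circle
through `x` and `c`, pointing towards `c`. -/
theorem inner_sin_inv_smul_sub_cos_smul {x c : V} (hx : ‖x‖ = 1) (hc : ‖c‖ = 1) {r : ℝ}
    (hr : sin r ≠ 0) (hxc : ⟪x, c⟫ = cos r) :
    ⟪x, (sin r)⁻¹ • (c - cos r • x)⟫ = 0 ∧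
      ⟪(sin r)⁻¹ • (c - cos r • x), c⟫ = sin r ∧
      ‖(sin r)⁻¹ • (c - cos r • x)‖ = 1 := by
  have hxx : ⟪x, x⟫ = 1 := by simp [hx]
  have hcc : ⟪c, c⟫ = 1 := by simp [hc]
  have hcx : ⟪c, x⟫ = cos r := by rw [real_inner_comm, hxc]
  have hpy := Real.sin_sq_add_cos_sq r
  refine ⟨?_, ?_, ?_⟩
  · simp only [real_inner_smul_right, inner_sub_right, hxc, hxx]
    ring
  · simp only [real_inner_smul_left, inner_sub_left, hcc, hxc]
    field_simp
    linear_combination -hpy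
  · have hsq : ‖(sin r)⁻¹ • (c - cos r • x)‖ ^ 2 = 1 := by
      rw [← real_inner_self_eq_norm_sq]
      simp only [real_inner_smul_left, real_inner_smul_right, inner_sub_left, inner_sub_right,
        hxx, hcc, hxc, hcx]
      field_simp
      linear_combination -hpy
    exact (pow_eq_one_iff_of_nonneg (norm_nonneg _) two_ne_zero).mp hsq

end GreatCircle

theorem cross_smul_right (x : E3) (a : ℝ) (y : E3) : cross x (a • y) = a • cross x y := by
  ext i
  fin_cases i <;> simp [cross] <;> ring

theorem cross_cross_self (x y : E3) : cross x (cross y x) = ⟪x, x⟫ • y - ⟪x, y⟫ • x := by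
  ext i
  fin_cases i <;>
    simp [cross, PiLp.inner_apply, Fin.sum_univ_three, EuclideanSpace.norm_sq_eq] <;> ring

theorem sdist_eq_angle {x y : E3} (hx : ‖x‖ = 1) (hy : ‖y‖ = 1) :
    sdist x y = InnerProductGeometry.angle x y := by
  simp [sdist, InnerProductGeometry.angle, hx, hy]

theorem sdist_comm (x y : E3) : sdist x y = sdist y x := by
  rw [sdist, sdist, real_inner_comm]

theorem sdist_triangle {x y z : E3} (hx : ‖x‖ = 1) (hy : ‖y‖ = 1) (hz : ‖z‖ = 1) :
    sdist x z ≤ sdist x y + sdist y z := by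
  rw [sdist_eq_angle hx hz, sdist_eq_angle hx hy, sdist_eq_angle hy hz]
  exact InnerProductGeometry.angle_le_angle_add_angle x y z

section TangentCircle

variable {γ : C1Curve a b} {t : ℝ} {c : E3} {r : ℝ}

theorem IsTangentCircleAt.inner_center (h : IsTangentCircleAt γ t c r) (ht : t ∈ Icc a b) :
    ⟪γ.toFun t, c⟫ = cos r := by
  obtain ⟨hc, -, hdist, -⟩ := h
  have hle := abs_real_inner_le_norm (γ.toFun t) c
  rw [γ.mem_sphere t ht, hc, one_mul, abs_le] at hle
  rw [← hdist, sdist, Real.cos_arccos hle.1 hle.2]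

theorem IsTangentCircleAt.normal_eq (h : IsTangentCircleAt γ t c r) (ht : t ∈ Icc a b) :
    normal γ t = (sin r)⁻¹ • (c - cos r • γ.toFun t) := by
  have hxx : ⟪γ.toFun t, γ.toFun t⟫ = 1 := by simp [γ.mem_sphere t ht]
  rw [normal, h.2.2.2, cross_smul_right, cross_cross_self, hxx, h.inner_center ht, one_smul]

theorem IsTangentCircleAt.sdist_center (h : IsTangentCircleAt γ t c r) (ht : t ∈ Icc a b)
    {ρ : ℝ} (hρ0 : 0 ≤ ρ) (hρr : ρ ≤ r) :
    ‖cos ρ • γ.toFun t + sin ρ • normal γ t‖ = 1 ∧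
      sdist (cos ρ • γ.toFun t + sin ρ • normal γ t) c = r - ρ := by
  have hr := h.2.1
  obtain ⟨hxn, hnc, hn⟩ := inner_sin_inv_smul_sub_cos_smul (γ.mem_sphere t ht) h.1
    (Real.sin_pos_of_pos_of_lt_pi hr.1 hr.2).ne' (h.inner_center ht)
  rw [h.normal_eq ht]
  refine ⟨norm_cos_smul_add_sin_smul (γ.mem_sphere t ht) hn hxn ρ, ?_⟩
  have hinner : ⟪cos ρ • γ.toFun t + sin ρ • (sin r)⁻¹ • (c - cos r • γ.toFun t), c⟫
      = cos (r - ρ) := by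
    rw [inner_add_left, real_inner_smul_left, real_inner_smul_left, h.inner_center ht, hnc,
      Real.cos_sub]
    ring
  rw [sdist, hinner, Real.arccos_cos (by linarith) (by linarith [hr.2])]

theorem TangentFromLeft.le_sdist (h : TangentFromLeft γ t c r) (ht : t ∈ Icc a b) {ρ : ℝ}
    (hρ0 : 0 ≤ ρ) (hρr : ρ ≤ r) :
    ∃ σ > 0, ∀ s ∈ Ioo (t - σ) (t + σ) ∩ Icc a b,
      ρ ≤ sdist (cos ρ • γ.toFun t + sin ρ • normal γ t) (γ.toFun s) := by
  obtain ⟨hcirc, δ, hδ, hout⟩ := h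
  obtain ⟨hv, hvc⟩ := hcirc.sdist_center ht hρ0 hρr
  refine ⟨δ, hδ, fun s hs => ?_⟩
  have htri := sdist_triangle (γ.mem_sphere s hs.2) hv hcirc.1
  rw [hvc, sdist_comm (γ.toFun s) (_ + _)] at htri
  linarith [hout s hs]

end TangentCircle

theorem stmt_6_general (a b : ℝ) (γ : C1Curve a b)
    (s₀ : ℝ) (hs₀ : s₀ ∈ Set.Icc a b) (ρ : ℝ) (hρ : ρ ∈ Set.Ioo 0 π)
    (hcurv : upperCurv γ s₀ < ((Real.cot ρ : ℝ) : EReal))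
    (v : E3) (hv : v = Real.cos ρ • γ.toFun s₀ + Real.sin ρ • normal γ s₀) :
    ∃ σ > 0, ∀ s ∈ Set.Ioo (s₀ - σ) (s₀ + σ) ∩ Set.Icc a b, ρ ≤ sdist v (γ.toFun s) := by
  obtain ⟨_, ⟨c, r, hleft, rfl⟩, hlt⟩ := sInf_lt_iff.mp hcurv
  have hρr : ρ < r :=
    (StrictAntiOn.lt_iff_gt strictAntiOn_cot hleft.1.2.1 hρ).mp (EReal.coe_lt_coe_iff.mp hlt)
  subst hv
  exact hleft.le_sdist hs₀ hρ.1.le hρr.le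

/-- Claim 1: let `γ : I → 𝕊²` be a `C¹` regular curve parametrized by arc
length, `s₀ ∈ I`, and `ρ ∈ (0,π)` with `κ⁺_γ(s₀) < cot ρ`; set
`𝐯 = (cos ρ)γ(s₀) + (sin ρ)𝐧_γ(s₀)`. Then there is `σ > 0` with `d(𝐯, γ(s)) ≥ ρ` for all
`s ∈ (s₀-σ, s₀+σ) ∩ I`. -/
theorem stmt_6 (a b : ℝ) (hab : a ≤ b) (γ : C1Curve a b) (hspeed : UnitSpeed γ)
    (s₀ : ℝ) (hs₀ : s₀ ∈ Set.Icc a b) (ρ : ℝ) (hρ : ρ ∈ Set.Ioo 0 π)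
    (hcurv : upperCurv γ s₀ < ((Real.cot ρ : ℝ) : EReal))
    (v : E3) (hv : v = Real.cos ρ • γ.toFun s₀ + Real.sin ρ • normal γ s₀) :
    ∃ σ > 0, ∀ s ∈ Set.Ioo (s₀ - σ) (s₀ + σ) ∩ Set.Icc a b, ρ ≤ sdist v (γ.toFun s) :=
  stmt_6_general a b γ s₀ hs₀ ρ hρ hcurv v hv

end Curves
end
end

section
/- Let −∞ < κ₁ < κ₂ < +∞ and P, Q ∈ SO₃(ℝ). On the set 𝓟_{κ₁}^{κ₂}(P,Q), with curves parametrized with constant speed on [0,1], the metrics d⁰ and d̄¹ induce the same topology; equivalently, for α_k, α ∈ 𝓟_{κ₁}^{κ₂}(P,Q), d⁰(α_k, α) → 0 if and only if d̄¹(α_k, α) → 0. -/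
open MeasureTheory Real Set Filter Topology NNReal RealInnerProductSpace

noncomputable section

/-!
Since `d⁰ ≤ d̄¹`, only `d⁰(α_k, α) → 0 ⇒ d̄¹(α_k, α) → 0` needs proof. For a constant-speed
`γ ∈ 𝓟_{κ₁}^{κ₂}(P,Q)` of length `L`, a.e. `γ̈ = L² (-γ + κ 𝐧)` with `κ₁ < κ < κ₂`; as `γ̇` is
Lipschitz, hence absolutely continuous, `γ̇` is in fact Lipschitz with the uniform constant
`L² (1 + max |κ₁| |κ₂|)`. For a function `u` with `K`-Lipschitz derivative, the Taylor expansion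
over a step `h` gives `‖u'‖ ≤ 2 sup ‖u‖ / h + K h`. Applied to `u = α_k - α`, this first shows that
the lengths of the `α_k` stay bounded once `d⁰(α_k, α)` is small, and then, choosing `h` small
and `k` large, that `α̇_k → α̇` uniformly.
-/

section Analysis

variable {E : Type*} [NormedAddCommGroup E] [NormedSpace ℝ E]

/-- The derivative is integrable and the primitive of `deriv f` is Lipschitz, so
`f - ∫ deriv f` is absolutely continuous with a.e. vanishing derivative, hence constant. -/
theorem AbsolutelyContinuousOnInterval.norm_sub_le_of_ae_hasDerivAt [CompleteSpace E]
    {f f' : ℝ → E} {a b C : ℝ} (hf : AbsolutelyContinuousOnInterval f a b)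
    (hf' : ∀ᵐ x, x ∈ uIcc a b → HasDerivAt f (f' x) x ∧ ‖f' x‖ ≤ C) :
    ‖f b - f a‖ ≤ C * |b - a| := by
  have hd : ∀ᵐ x, x ∈ uIcc a b → HasDerivAt f (deriv f x) x ∧ ‖deriv f x‖ ≤ C := by
    filter_upwards [hf'] with x hx hmem
    obtain ⟨hder, hC⟩ := hx hmem
    exact hder.deriv ▸ ⟨hder, hC⟩
  have hbound : ∀ {c d}, uIcc c d ⊆ uIcc a b → ∀ᵐ x, x ∈ uIoc c d → ‖deriv f x‖ ≤ C :=
    fun hcd => by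
      filter_upwards [hd] with x hx hmem using (hx (hcd (uIoc_subset_uIcc hmem))).2
  have hint : ∀ {c d}, uIcc c d ⊆ uIcc a b → IntervalIntegrable (deriv f) volume c d :=
    fun hcd => intervalIntegrable_const.mono_fun' (aestronglyMeasurable_deriv f _)
      ((ae_restrict_iff' measurableSet_uIoc).2 (hbound hcd))
  set F : ℝ → E := fun x => ∫ t in a..x, deriv f t with hF_def
  have hF : LipschitzOnWith C.toNNReal F (uIcc a b) := by
    refine LipschitzOnWith.of_dist_le_mul fun x hx y hy => ?_
    rw [dist_eq_norm, hF_def, intervalIntegral.integral_interval_sub_left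
      (hint (uIcc_subset_uIcc left_mem_uIcc hx)) (hint (uIcc_subset_uIcc left_mem_uIcc hy)),
      Real.dist_eq]
    exact (intervalIntegral.norm_integral_le_of_norm_le_const_ae
      (hbound (uIcc_subset_uIcc hy hx))).trans (by gcongr; exact Real.le_coe_toNNReal C)
  obtain ⟨c, hc⟩ := (hf.sub hF.absolutelyContinuousOnInterval).const_of_ae_hasDerivAt_zero (by
    filter_upwards [hd, (hint subset_rfl).ae_hasDerivAt_integral] with x hx hxF hmem
    simpa using (hx hmem).1.sub (hxF hmem a left_mem_uIcc))
  have hfF : f b - f a = F b := by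
    have h := (hc b right_mem_uIcc).trans (hc a left_mem_uIcc).symm
    simp only [Pi.sub_apply, hF_def, intervalIntegral.integral_same, sub_zero] at h
    rw [← h, sub_sub_cancel]
  rw [hfF]
  exact intervalIntegral.norm_integral_le_of_norm_le_const_ae (hbound subset_rfl)

theorem norm_sub_sub_smul_le_of_lipschitz_deriv {f f' : ℝ → E} {s : Set ℝ} {K : ℝ}
    (hK : 0 ≤ K) (hs : Convex ℝ s) (hf : ∀ x ∈ s, HasDerivWithinAt f (f' x) s x)
    (hf' : ∀ x ∈ s, ∀ y ∈ s, ‖f' x - f' y‖ ≤ K * |x - y|) {x y : ℝ} (hx : x ∈ s)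
    (hy : y ∈ s) :
    ‖f y - f x - (y - x) • f' x‖ ≤ K * (y - x) ^ 2 := by
  have hxy : uIcc x y ⊆ s := hs.ordConnected.uIcc_subset hx hy
  have h := Convex.norm_image_sub_le_of_norm_hasDerivWithin_le
    (f := fun u => f u - u • f' x) (f' := fun u => f' u - f' x) (C := K * |y - x|)
    (fun u hu => (((hf u (hxy hu)).mono hxy).sub ((hasDerivWithinAt_id u _).smul_const (f' x)))
      |>.congr_deriv (by simp))
    (fun u hu => (hf' u (hxy hu) x hx).trans
      (mul_le_mul_of_nonneg_left (abs_sub_left_of_mem_uIcc hu) hK))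
    (convex_uIcc x y) left_mem_uIcc right_mem_uIcc
  calc ‖f y - f x - (y - x) • f' x‖ = ‖(f y - y • f' x) - (f x - x • f' x)‖ := by
        rw [sub_smul]; congr 1; abel
    _ ≤ K * |y - x| * ‖y - x‖ := h
    _ = K * (y - x) ^ 2 := by rw [Real.norm_eq_abs, mul_assoc, abs_mul_abs_self, sq]

/-- A Landau–Kolmogorov type inequality, from the Taylor estimate at `t` over a step `h`. -/
theorem norm_deriv_le_of_norm_le_of_lipschitz_deriv {f f' : ℝ → E} {a b K d h t : ℝ}
    (hK : 0 ≤ K) (hf : ∀ x ∈ Icc a b, HasDerivWithinAt f (f' x) (Icc a b) x)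
    (hf' : ∀ x ∈ Icc a b, ∀ y ∈ Icc a b, ‖f' x - f' y‖ ≤ K * |x - y|)
    (hd : ∀ x ∈ Icc a b, ‖f x‖ ≤ d) (hh : 0 < h) (hhab : 2 * h ≤ b - a) (ht : t ∈ Icc a b) :
    ‖f' t‖ ≤ 2 * d / h + K * h := by
  obtain ⟨t', ht', hdist⟩ : ∃ t' ∈ Icc a b, |t' - t| = h := by
    rcases le_or_gt (t + h) b with htb | htb
    · exact ⟨t + h, ⟨by linarith [ht.1], htb⟩, by simp [abs_of_pos hh]⟩
    · exact ⟨t - h, ⟨by linarith, by linarith [ht.2]⟩, by simp [abs_of_pos hh]⟩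
  have htaylor := norm_sub_sub_smul_le_of_lipschitz_deriv hK (convex_Icc a b) hf hf' ht ht'
  rw [← sq_abs, hdist] at htaylor
  have hkey : h * ‖f' t‖ ≤ 2 * d + K * h ^ 2 :=
    calc h * ‖f' t‖ = ‖(t' - t) • f' t‖ := by rw [norm_smul, Real.norm_eq_abs, hdist]
      _ ≤ ‖f t'‖ + ‖f t‖ + ‖f t' - f t - (t' - t) • f' t‖ := by
          have := norm_sub_le (f t' - f t) (f t' - f t - (t' - t) • f' t)
          rw [sub_sub_cancel] at this
          linarith [norm_sub_le (f t') (f t)]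
      _ ≤ 2 * d + K * h ^ 2 := by linarith [hd t' ht', hd t ht]
  rw [div_add' _ _ _ hh.ne', le_div_iff₀ hh]
  linarith

theorem tendsto_zero_of_le_add_div_add_mul {ι : Type*} {l : Filter ι} {x y : ι → ℝ} {C : ℝ}
    (hC : 0 ≤ C) (hx : Tendsto x l (𝓝 0)) (hy : ∀ i, 0 ≤ y i)
    (hle : ∀ᶠ i in l, ∀ h, 0 < h → h ≤ 1 / 2 → y i ≤ x i + (2 * x i / h + C * h)) :
    Tendsto y l (𝓝 0) := by
  refine tendsto_order.2 ⟨fun a ha => Eventually.of_forall fun i => ha.trans_le (hy i),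
    fun ε hε => ?_⟩
  set h := min (1 / 2) (ε / (2 * (C + 1)))
  have hh : 0 < h := lt_min one_half_pos (by positivity)
  have hCh : C * h ≤ ε / 2 :=
    calc C * h ≤ (C + 1) * (ε / (2 * (C + 1))) :=
          mul_le_mul (by linarith) (min_le_right _ _) hh.le (by linarith)
      _ = ε / 2 := by field_simp
  have hsmall : Tendsto (fun i => x i + 2 * x i / h) l (𝓝 0) := by
    simpa using hx.add ((hx.const_mul 2).div_const h)
  filter_upwards [hle, hsmall.eventually (gt_mem_nhds (half_pos hε))] with i hi hxi
  linarith [hi h hh (min_le_left _ _)]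

theorem ae_mem_Ioo_of_lt_essInf_of_essSup_lt {α : Type*} [MeasurableSpace α] {μ : Measure α}
    {f : α → ℝ} {a b : ℝ} (ha : (a : EReal) < essInf (fun x => (f x : EReal)) μ)
    (hb : essSup (fun x => (f x : EReal)) μ < b) : ∀ᵐ x ∂μ, f x ∈ Ioo a b := by
  filter_upwards [ae_lt_of_lt_essInf ha, ae_lt_of_essSup_lt hb] with x hax hxb
  exact ⟨EReal.coe_lt_coe_iff.1 hax, EReal.coe_lt_coe_iff.1 hxb⟩

end Analysis

namespace Curves

section Sphere

theorem norm_cross_le (x y : E3) : ‖cross x y‖ ≤ ‖x‖ * ‖y‖ := by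
  have hsq : ∀ v : E3, ‖v‖ ^ 2 = v 0 ^ 2 + v 1 ^ 2 + v 2 ^ 2 := fun v => by
    rw [EuclideanSpace.norm_eq, Real.sq_sqrt (by positivity)]
    simp [Fin.sum_univ_three]
  -- Lagrange's identity `‖x × y‖² + ⟪x, y⟫² = ‖x‖² ‖y‖²`.
  have hlagrange : ‖cross x y‖ ^ 2 ≤ (‖x‖ * ‖y‖) ^ 2 := by
    rw [mul_pow, hsq, hsq, hsq]
    simp only [cross, EuclideanSpace.equiv, PiLp.coe_symm_continuousLinearEquiv,
      PiLp.toLp_apply, Matrix.cons_val_zero, Matrix.cons_val_one, Matrix.cons_val_two,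
      Matrix.head_cons, Matrix.tail_cons]
    nlinarith [sq_nonneg (x 0 * y 0 + x 1 * y 1 + x 2 * y 2)]
  exact pow_le_pow_iff_left₀ (norm_nonneg _) (by positivity) two_ne_zero |>.1 hlagrange

theorem norm_sub_le_sdist {x y : E3} (hx : ‖x‖ = 1) (hy : ‖y‖ = 1) : ‖x - y‖ ≤ sdist x y := by
  have hinner : |⟪x, y⟫| ≤ 1 := by simpa [hx, hy] using abs_real_inner_le_norm x y
  have hcos : Real.cos (sdist x y) = ⟪x, y⟫ :=
    Real.cos_arccos (abs_le.1 hinner).1 (abs_le.1 hinner).2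
  have hchord : ‖x - y‖ ^ 2 = 2 - 2 * ⟪x, y⟫ := by rw [norm_sub_sq_real, hx, hy]; ring
  have hsq : ‖x - y‖ ^ 2 ≤ sdist x y ^ 2 := by
    linarith [Real.one_sub_sq_div_two_le_cos (x := sdist x y)]
  exact pow_le_pow_iff_left₀ (norm_nonneg _) (Real.arccos_nonneg _) two_ne_zero |>.1 hsq

end Sphere

section CurveEstimates

variable {γ : C1Curve 0 1}

theorem clength_pos (hcs : ConstantSpeed γ) : 0 < clength γ :=
  hcs 0 (left_mem_Icc.2 zero_le_one) ▸ norm_pos_iff.2 (γ.regular 0 (left_mem_Icc.2 zero_le_one))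

theorem deriv_eq_clength_smul_tangent (hcs : ConstantSpeed γ) {t : ℝ} (ht : t ∈ Icc (0:ℝ) 1) :
    γ.deriv t = clength γ • tangent γ t := by
  rw [tangent, hcs t ht, smul_smul, mul_inv_cancel₀ (clength_pos hcs).ne', one_smul]

theorem norm_normal_le {t : ℝ} (ht : t ∈ Icc (0:ℝ) 1) : ‖normal γ t‖ ≤ 1 := by
  have htangent : ‖tangent γ t‖ = 1 := by
    rw [tangent, norm_smul, norm_inv, norm_norm,
      inv_mul_cancel₀ (norm_ne_zero_iff.2 (γ.regular t ht))]
  simpa [normal, γ.mem_sphere t ht, htangent] using norm_cross_le (γ.toFun t) (tangent γ t)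

theorem norm_deriv_sub_le_of_memP {κ₁ κ₂ : ℝ} {P Q : Matrix (Fin 3) (Fin 3) ℝ}
    (hcs : ConstantSpeed γ) (hmem : MemP κ₁ κ₂ P Q γ) :
    ∀ s ∈ Icc (0:ℝ) 1, ∀ t ∈ Icc (0:ℝ) 1,
      ‖γ.deriv s - γ.deriv t‖ ≤ clength γ ^ 2 * (1 + max |κ₁| |κ₂|) * |s - t| := by
  intro s hs t ht
  obtain ⟨-, ⟨K, hK⟩, κ, ⟨-, hκ⟩, hinf, -, hsup⟩ := hmem
  set L := clength γ
  set M := max |κ₁| |κ₂|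
  have hL := clength_pos hcs
  have hae : ∀ᵐ x, x ∈ Icc (0:ℝ) 1 → HasDerivWithinAt (tangent γ)
      (L • (-(γ.toFun x) + κ x • normal γ x)) (Icc 0 1) x ∧ |κ x| ≤ M := by
    rw [← ae_restrict_iff' measurableSet_Icc]
    filter_upwards [hκ, ae_mem_Ioo_of_lt_essInf_of_essSup_lt hinf hsup,
      ae_restrict_mem measurableSet_Icc] with x hx hκx hxI
    exact ⟨by rwa [hcs x hxI] at hx, abs_le_max_abs_abs hκx.1.le hκx.2.le⟩
  have hts : uIcc t s ⊆ Icc 0 1 := uIcc_subset_Icc ht hs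
  refine (hK.mono hts).absolutelyContinuousOnInterval.norm_sub_le_of_ae_hasDerivAt
    (f' := fun x => L • L • (-(γ.toFun x) + κ x • normal γ x)) ?_
  filter_upwards [hae, Measure.ae_ne volume 0, Measure.ae_ne volume 1] with x hx hx0 hx1 hxts
  have hxI := hts hxts
  have hnhds : Icc (0:ℝ) 1 ∈ 𝓝 x :=
    Icc_mem_nhds (lt_of_le_of_ne hxI.1 hx0.symm) (lt_of_le_of_ne hxI.2 hx1)
  obtain ⟨hder, hκx⟩ := hx hxI
  refine ⟨((hder.hasDerivAt hnhds).const_smul L).congr_of_eventuallyEq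
    (Filter.eventually_of_mem hnhds fun y hy => deriv_eq_clength_smul_tangent hcs hy), ?_⟩
  have hacc : ‖-(γ.toFun x) + κ x • normal γ x‖ ≤ 1 + M :=
    calc ‖-(γ.toFun x) + κ x • normal γ x‖ ≤ ‖γ.toFun x‖ + |κ x| * ‖normal γ x‖ := by
          simpa [norm_smul] using norm_add_le (-(γ.toFun x)) (κ x • normal γ x)
      _ ≤ 1 + M * 1 := by
          rw [γ.mem_sphere x hxI]
          gcongr
          exact norm_normal_le hxI
      _ = 1 + M := by ring
  calc ‖L • L • (-(γ.toFun x) + κ x • normal γ x)‖ ≤ L * (L * (1 + M)) := by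
        rw [norm_smul, norm_smul, Real.norm_of_nonneg hL.le]
        gcongr
    _ = L ^ 2 * (1 + M) := by ring

end CurveEstimates

section Distances

variable (β α : C1Curve 0 1)

theorem sdist_le_d0 {t : ℝ} (ht : t ∈ Icc (0:ℝ) 1) :
    sdist (β.toFun t) (α.toFun t) ≤ d0 β α :=
  le_ciSup (f := fun t : Icc (0:ℝ) 1 => sdist (β.toFun t) (α.toFun t))
    ⟨π, by rintro _ ⟨_, rfl⟩; exact Real.arccos_le_pi _⟩ ⟨t, ht⟩

theorem d0_nonneg : 0 ≤ d0 β α :=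
  (Real.arccos_nonneg _).trans (sdist_le_d0 β α (left_mem_Icc.2 zero_le_one))

theorem norm_sub_le_d0 {t : ℝ} (ht : t ∈ Icc (0:ℝ) 1) : ‖β.toFun t - α.toFun t‖ ≤ d0 β α :=
  (norm_sub_le_sdist (β.mem_sphere t ht) (α.mem_sphere t ht)).trans (sdist_le_d0 β α ht)

theorem d1bar_le {c : ℝ}
    (h : ∀ t ∈ Icc (0:ℝ) 1, sdist (β.toFun t) (α.toFun t) + ‖β.deriv t - α.deriv t‖ ≤ c) :
    d1bar β α ≤ c :=
  ciSup_le fun t => h t t.2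

theorem d0_le_d1bar : d0 β α ≤ d1bar β α := by
  obtain ⟨C, hC⟩ := isCompact_Icc.exists_bound_of_continuousOn (β.deriv_cont.sub α.deriv_cont)
  have hbdd : BddAbove (range fun t : Icc (0:ℝ) 1 =>
      sdist (β.toFun t) (α.toFun t) + ‖β.deriv t - α.deriv t‖) :=
    ⟨π + C, by rintro _ ⟨t, rfl⟩; exact add_le_add (Real.arccos_le_pi _) (hC t t.2)⟩
  exact ciSup_le fun t => (le_add_of_nonneg_right (norm_nonneg _)).trans (le_ciSup hbdd t)

variable {β α} {Kβ Kα h : ℝ}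

theorem norm_deriv_sub_le_of_lipschitz_deriv (hKβ : 0 ≤ Kβ) (hKα : 0 ≤ Kα)
    (hβ : ∀ s ∈ Icc (0:ℝ) 1, ∀ t ∈ Icc (0:ℝ) 1, ‖β.deriv s - β.deriv t‖ ≤ Kβ * |s - t|)
    (hα : ∀ s ∈ Icc (0:ℝ) 1, ∀ t ∈ Icc (0:ℝ) 1, ‖α.deriv s - α.deriv t‖ ≤ Kα * |s - t|)
    (hh : 0 < h) (hh2 : h ≤ 1 / 2) {t : ℝ} (ht : t ∈ Icc (0:ℝ) 1) :
    ‖β.deriv t - α.deriv t‖ ≤ 2 * d0 β α / h + (Kβ + Kα) * h := by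
  refine norm_deriv_le_of_norm_le_of_lipschitz_deriv (add_nonneg hKβ hKα)
    (fun x hx => (β.hasDeriv x hx).sub (α.hasDeriv x hx)) (fun x hx y hy => ?_)
    (fun x hx => norm_sub_le_d0 β α hx) hh (by linarith) ht
  rw [sub_sub_sub_comm, add_mul]
  exact (norm_sub_le _ _).trans (add_le_add (hβ x hx y hy) (hα x hx y hy))

theorem d1bar_le_of_lipschitz_deriv (hKβ : 0 ≤ Kβ) (hKα : 0 ≤ Kα)
    (hβ : ∀ s ∈ Icc (0:ℝ) 1, ∀ t ∈ Icc (0:ℝ) 1, ‖β.deriv s - β.deriv t‖ ≤ Kβ * |s - t|)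
    (hα : ∀ s ∈ Icc (0:ℝ) 1, ∀ t ∈ Icc (0:ℝ) 1, ‖α.deriv s - α.deriv t‖ ≤ Kα * |s - t|)
    (hh : 0 < h) (hh2 : h ≤ 1 / 2) :
    d1bar β α ≤ d0 β α + (2 * d0 β α / h + (Kβ + Kα) * h) :=
  d1bar_le β α fun _ ht => add_le_add (sdist_le_d0 β α ht)
    (norm_deriv_sub_le_of_lipschitz_deriv hKβ hKα hβ hα hh hh2 ht)

/-- Compare the speeds at `t = 0` with `h = 1 / (4 m L_β)`: if `L_β` were large, the bound on
`‖β̇ 0 - α̇ 0‖` would force `L_β ≤ 5 L_α / 2`. -/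
theorem clength_le_of_d0_le {m : ℝ} (hm : 0 < m) (hcsβ : ConstantSpeed β)
    (hcsα : ConstantSpeed α)
    (hβ : ∀ s ∈ Icc (0:ℝ) 1, ∀ t ∈ Icc (0:ℝ) 1,
      ‖β.deriv s - β.deriv t‖ ≤ clength β ^ 2 * m * |s - t|)
    (hα : ∀ s ∈ Icc (0:ℝ) 1, ∀ t ∈ Icc (0:ℝ) 1,
      ‖α.deriv s - α.deriv t‖ ≤ clength α ^ 2 * m * |s - t|)
    (hd : d0 β α ≤ 1 / (32 * m)) :
    clength β ≤ 3 * clength α + 1 / m := by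
  set Lβ := clength β
  set Lα := clength α
  have hLβ : 0 < Lβ := clength_pos hcsβ
  have hLα : 0 < Lα := clength_pos hcsα
  by_contra! hlt
  have hm' : 0 < 1 / m := one_div_pos.2 hm
  have hmLβ : 1 < m * Lβ := (div_lt_iff₀' hm).1 (by linarith)
  set h := 1 / (4 * m * Lβ) with h_def
  have hh : 0 < h := by positivity
  have hh2 : h ≤ 1 / 2 := by
    rw [h_def, div_le_div_iff₀ (by positivity) two_pos]
    linarith
  have hspeed : Lβ - Lα ≤ ‖β.deriv 0 - α.deriv 0‖ := by
    simpa [hcsβ 0 (left_mem_Icc.2 zero_le_one), hcsα 0 (left_mem_Icc.2 zero_le_one)] using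
      norm_sub_norm_le (β.deriv 0) (α.deriv 0)
  have hdist : 2 * d0 β α / h ≤ Lβ / 4 := by
    have : Lβ / 4 * h = 2 * (1 / (32 * m)) := by rw [h_def]; field_simp; ring
    rw [div_le_iff₀ hh, this]
    linarith
  have hlip : (Lβ ^ 2 * m + Lα ^ 2 * m) * h ≤ Lβ / 4 + Lα / 4 := by
    have : (Lβ ^ 2 * m + Lα ^ 2 * m) * h = Lβ / 4 + Lα ^ 2 / (4 * Lβ) := by
      rw [h_def]; field_simp
    rw [this, add_le_add_iff_left, div_le_div_iff₀ (by positivity) four_pos]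
    nlinarith
  linarith [norm_deriv_sub_le_of_lipschitz_deriv (by positivity) (by positivity) hβ hα hh hh2
    (left_mem_Icc.2 zero_le_one)]

end Distances

theorem stmt_12_general (κ₁ κ₂ : ℝ) (P Q : SO3)
    (A : ℕ → C1Curve 0 1) (α : C1Curve 0 1)
    (hA : ∀ k, ConstantSpeed (A k) ∧
      MemP κ₁ κ₂ (P : Matrix (Fin 3) (Fin 3) ℝ) (Q : Matrix (Fin 3) (Fin 3) ℝ) (A k))
    (hα : ConstantSpeed α ∧
      MemP κ₁ κ₂ (P : Matrix (Fin 3) (Fin 3) ℝ) (Q : Matrix (Fin 3) (Fin 3) ℝ) α) :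
    Filter.Tendsto (fun k => d0 (A k) α) Filter.atTop (𝓝 0) ↔
    Filter.Tendsto (fun k => d1bar (A k) α) Filter.atTop (𝓝 0) := by
  refine ⟨fun hd0 => ?_, fun hd1 =>
    squeeze_zero (fun k => d0_nonneg _ _) (fun k => d0_le_d1bar _ _) hd1⟩
  set m := 1 + max |κ₁| |κ₂|
  set L := clength α
  set Λ := 3 * L + 1 / m
  have hm : 0 < m := by positivity
  have hlipα := norm_deriv_sub_le_of_memP hα.1 hα.2
  have hlip := fun k => norm_deriv_sub_le_of_memP (hA k).1 (hA k).2
  have hspeed : ∀ᶠ k in atTop, clength (A k) ≤ Λ :=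
    (hd0.eventually (ge_mem_nhds (by positivity : (0:ℝ) < 1 / (32 * m)))).mono fun k hk =>
      clength_le_of_d0_le hm (hA k).1 hα.1 (hlip k) hlipα hk
  refine tendsto_zero_of_le_add_div_add_mul (C := (Λ ^ 2 + L ^ 2) * m) (by positivity) hd0
    (fun k => (d0_nonneg _ _).trans (d0_le_d1bar _ _)) ?_
  filter_upwards [hspeed] with k hk h hh hh2
  refine (d1bar_le_of_lipschitz_deriv (by positivity) (by positivity) (hlip k) hlipα hh
    hh2).trans ?_
  have hk0 := (clength_pos (hA k).1).le
  gcongr _ + (_ + ?_ * _)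
  rw [add_mul]
  gcongr

/-- Theorem `thm-2`: on `𝓟_{κ₁}^{κ₂}(P,Q)` (curves in constant-speed
parametrization), the metrics `d⁰` and `d̄¹` induce the same topology: a sequence converges
in `d⁰` iff it converges in `d̄¹`. -/
theorem stmt_12 (κ₁ κ₂ : ℝ) (h12 : κ₁ < κ₂) (P Q : SO3)
    (A : ℕ → C1Curve 0 1) (α : C1Curve 0 1)
    (hA : ∀ k, ConstantSpeed (A k) ∧
      MemP κ₁ κ₂ (P : Matrix (Fin 3) (Fin 3) ℝ) (Q : Matrix (Fin 3) (Fin 3) ℝ) (A k))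
    (hα : ConstantSpeed α ∧
      MemP κ₁ κ₂ (P : Matrix (Fin 3) (Fin 3) ℝ) (Q : Matrix (Fin 3) (Fin 3) ℝ) α) :
    Filter.Tendsto (fun k => d0 (A k) α) Filter.atTop (𝓝 0) ↔
    Filter.Tendsto (fun k => d1bar (A k) α) Filter.atTop (𝓝 0) :=
  stmt_12_general κ₁ κ₂ P Q A α hA hα

end Curves
end
end

section
/- Let −∞ < κ₁ < κ₂ < +∞ and P, Q ∈ SO₃(ℝ). Let α_k, α₀ ∈ 𝓟_{κ₁}^{κ₂}(P,Q) be parametrized with constant speed on [0,1], and suppose d⁰(α_k, α₀) → 0 as k → ∞. Then α̇_k converges to α̇₀ uniformly on [0,1]. -/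
open MeasureTheory Real Set Filter Topology NNReal RealInnerProductSpace

noncomputable section

/-!
A constant-speed curve `γ ∈ 𝓟_{κ₁}^{κ₂}(P,Q)` of length `L` has `γ̇ = L 𝐭` with
`𝐭' = L (-γ + κ 𝐧)` a.e., so `γ̇` is `L² (1 + max |κ₁| |κ₂|)`-Lipschitz: a Lipschitz function
whose a.e. derivative is bounded by `C` is `C`-Lipschitz, by the fundamental theorem of calculus
for absolutely continuous functions. Hence `γ` stays within `L² (1 + max |κ₁| |κ₂|) (u - t)²` of
its tangent line, and comparing the tangent lines of `α_k` and `α₀` at `t` through the chords to a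
nearby time `u` gives `|u - t| ‖α̇_k(t) - α̇₀(t)‖ ≤ 2 d⁰(α_k, α₀) + C (u - t)²`. Once the lengths
of the `α_k` are bounded, taking `|u - t|` small yields uniform convergence. They are bounded
because a much longer `α_k` would leave `α_k(0)` faster than `α₀` leaves `α₀(0)`, while staying
`d⁰`-close to `α₀`.
-/

section

variable {F : Type*} [NormedAddCommGroup F] [NormedSpace ℝ F]

theorem LipschitzOnWith.norm_sub_le_of_ae_hasDerivAt {g g' : ℝ → F} {K : ℝ≥0} {a b C : ℝ}
    (hg : LipschitzOnWith K g (Icc a b)) (hab : a ≤ b)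
    (h : ∀ᵐ t, t ∈ Ioo a b → HasDerivAt g (g' t) t ∧ ‖g' t‖ ≤ C) :
    ‖g b - g a‖ ≤ C * (b - a) := by
  -- Test against a norming functional `ℓ` and apply the FTC to the absolutely continuous `ℓ ∘ g`.
  obtain ⟨ℓ, hℓ, hℓg⟩ := exists_dual_vector'' ℝ (g b - g a)
  have hφ : AbsolutelyContinuousOnInterval (fun t => ℓ (g t)) a b :=
    (ℓ.lipschitz.comp_lipschitzOnWith (uIcc_of_le hab ▸ hg)).absolutelyContinuousOnInterval
  have hderiv : ∀ᵐ t, t ∈ uIoc a b → ‖deriv (fun t => ℓ (g t)) t‖ ≤ C := by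
    filter_upwards [h, Measure.ae_ne volume b] with t ht htb htI
    rw [uIoc_of_le hab] at htI
    obtain ⟨hd, hC⟩ := ht ⟨htI.1, lt_of_le_of_ne htI.2 htb⟩
    have hφd : HasDerivAt (fun t => ℓ (g t)) (ℓ (g' t)) t := ℓ.hasFDerivAt.comp_hasDerivAt t hd
    rw [hφd.deriv]
    calc ‖ℓ (g' t)‖ ≤ ‖ℓ‖ * ‖g' t‖ := ℓ.le_opNorm _
      _ ≤ 1 * ‖g' t‖ := by gcongr
      _ ≤ C := by rwa [one_mul]
  calc ‖g b - g a‖ = ℓ (g b) - ℓ (g a) := by rw [← map_sub, hℓg]; rfl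
    _ = ∫ t in a..b, deriv (fun t => ℓ (g t)) t := hφ.integral_deriv_eq_sub.symm
    _ ≤ ‖∫ t in a..b, deriv (fun t => ℓ (g t)) t‖ := le_norm_self _
    _ ≤ C * |b - a| := intervalIntegral.norm_integral_le_of_norm_le_const_ae hderiv
    _ = C * (b - a) := by rw [abs_of_nonneg (sub_nonneg.2 hab)]

theorem LipschitzOnWith.of_ae_hasDerivWithinAt_norm_le {g g' : ℝ → F} {K C : ℝ≥0} {a b : ℝ}
    (hg : LipschitzOnWith K g (Icc a b))
    (h : ∀ᵐ t ∂volume.restrict (Icc a b),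
      HasDerivWithinAt g (g' t) (Icc a b) t ∧ ‖g' t‖ ≤ C) :
    LipschitzOnWith C g (Icc a b) := by
  have h' : ∀ᵐ t, t ∈ Ioo a b → HasDerivAt g (g' t) t ∧ ‖g' t‖ ≤ C := by
    rw [ae_restrict_iff' measurableSet_Icc] at h
    filter_upwards [h] with t ht htI
    obtain ⟨hd, hC⟩ := ht (Ioo_subset_Icc_self htI)
    exact ⟨hd.hasDerivAt (Icc_mem_nhds htI.1 htI.2), hC⟩
  have hle : ∀ x ∈ Icc a b, ∀ y ∈ Icc a b, x ≤ y → ‖g y - g x‖ ≤ C * (y - x) :=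
    fun x hx y hy hxy => (hg.mono (Icc_subset_Icc hx.1 hy.2)).norm_sub_le_of_ae_hasDerivAt hxy
      (h'.mono fun t ht htI => ht ⟨hx.1.trans_lt htI.1, htI.2.trans_le hy.2⟩)
  refine LipschitzOnWith.of_dist_le_mul fun x hx y hy => ?_
  rw [dist_eq_norm, Real.dist_eq]
  rcases le_total y x with hxy | hxy
  · rw [abs_of_nonneg (sub_nonneg.2 hxy)]
    exact hle y hy x hx hxy
  · rw [abs_of_nonpos (sub_nonpos.2 hxy), norm_sub_rev, neg_sub]
    exact hle x hx y hy hxy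

theorem norm_sub_sub_smul_le_of_lipschitzOnWith {f f' : ℝ → F} {K : ℝ≥0} {s : Set ℝ}
    (hs : Convex ℝ s) (hf : ∀ x ∈ s, HasDerivWithinAt f (f' x) s x)
    (hf' : LipschitzOnWith K f' s) {t u : ℝ} (ht : t ∈ s) (hu : u ∈ s) :
    ‖f u - f t - (u - t) • f' t‖ ≤ K * (u - t) ^ 2 := by
  have hF : ∀ r ∈ s ∩ uIcc t u,
      HasDerivWithinAt (fun r => f r - r • f' t) (f' r - f' t) (s ∩ uIcc t u) r := by
    intro r hr
    refine ((hf r hr.1).mono inter_subset_left).sub ?_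
    simpa using ((hasDerivAt_id r).smul_const (f' t)).hasDerivWithinAt
  have hbound : ∀ r ∈ s ∩ uIcc t u, ‖f' r - f' t‖ ≤ K * |u - t| := by
    intro r hr
    rw [← dist_eq_norm]
    calc dist (f' r) (f' t) ≤ K * dist r t := hf'.dist_le_mul r hr.1 t ht
      _ ≤ K * |u - t| := by gcongr; exact abs_sub_left_of_mem_uIcc hr.2
  have := (hs.inter (convex_uIcc t u)).norm_image_sub_le_of_norm_hasDerivWithin_le hF hbound
    ⟨ht, left_mem_uIcc⟩ ⟨hu, right_mem_uIcc⟩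
  calc ‖f u - f t - (u - t) • f' t‖ = ‖(f u - u • f' t) - (f t - t • f' t)‖ := by
        rw [sub_smul]; congr 1; abel
    _ ≤ K * |u - t| * ‖u - t‖ := this
    _ = K * (u - t) ^ 2 := by rw [Real.norm_eq_abs, mul_assoc, abs_mul_abs_self, sq]

theorem abs_mul_norm_sub_le_of_lipschitzOnWith {f f' g g' : ℝ → F} {K₁ K₂ : ℝ≥0} {s : Set ℝ}
    {δ : ℝ} (hs : Convex ℝ s) (hf : ∀ x ∈ s, HasDerivWithinAt f (f' x) s x)
    (hf' : LipschitzOnWith K₁ f' s) (hg : ∀ x ∈ s, HasDerivWithinAt g (g' x) s x)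
    (hg' : LipschitzOnWith K₂ g' s) (hfg : ∀ x ∈ s, ‖f x - g x‖ ≤ δ) {t u : ℝ} (ht : t ∈ s)
    (hu : u ∈ s) :
    |u - t| * ‖f' t - g' t‖ ≤ 2 * δ + (K₁ + K₂) * (u - t) ^ 2 := by
  have hf₂ := norm_sub_sub_smul_le_of_lipschitzOnWith hs hf hf' ht hu
  have hg₂ := norm_sub_sub_smul_le_of_lipschitzOnWith hs hg hg' ht hu
  have hdecomp : (u - t) • (f' t - g' t) = ((f u - g u) - (f t - g t))
      - (f u - f t - (u - t) • f' t) + (g u - g t - (u - t) • g' t) := by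
    rw [smul_sub]; abel
  calc |u - t| * ‖f' t - g' t‖ = ‖(u - t) • (f' t - g' t)‖ := by
        rw [norm_smul, Real.norm_eq_abs]
    _ ≤ ‖f u - g u‖ + ‖f t - g t‖ + ‖f u - f t - (u - t) • f' t‖
        + ‖g u - g t - (u - t) • g' t‖ := by
      rw [hdecomp]
      refine (norm_add_le _ _).trans (add_le_add_left ((norm_sub_le _ _).trans ?_) _)
      exact add_le_add_left (norm_sub_le _ _) _
    _ ≤ 2 * δ + (K₁ + K₂) * (u - t) ^ 2 := by linarith [hfg u hu, hfg t ht]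

theorem tendstoUniformlyOn_deriv_of_lipschitzOnWith {ι : Type*} {l : Filter ι}
    {f f' : ι → ℝ → F} {g g' : ℝ → F} {K : ℝ≥0} {a b : ℝ} (hab : a < b)
    (hf : ∀ i, ∀ x ∈ Icc a b, HasDerivWithinAt (f i) (f' i x) (Icc a b) x)
    (hf' : ∀ᶠ i in l, LipschitzOnWith K (f' i) (Icc a b))
    (hg : ∀ x ∈ Icc a b, HasDerivWithinAt g (g' x) (Icc a b) x)
    (hg' : LipschitzOnWith K g' (Icc a b)) (hfg : TendstoUniformlyOn f g l (Icc a b)) :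
    TendstoUniformlyOn f' g' l (Icc a b) := by
  rw [Metric.tendstoUniformlyOn_iff] at hfg ⊢
  intro ε hε
  -- Compare derivatives at `x` through the chord to a point `u` at distance `s` from `x`.
  set s := min ((b - a) / 2) (ε / (4 * (K + 1)))
  have hs : 0 < s := lt_min (by linarith) (by positivity)
  have hsK : 2 * K * s < ε / 2 := by
    have : s * (4 * (K + 1)) ≤ ε := (le_div_iff₀ (by positivity)).1 (min_le_right _ _)
    nlinarith
  filter_upwards [hf', hfg (s * ε / 4) (by positivity)] with i hi hclose x hx
  obtain ⟨u, hu, hux⟩ : ∃ u ∈ Icc a b, |u - x| = s := by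
    have : s ≤ (b - a) / 2 := min_le_left _ _
    by_cases h : x + s ≤ b
    · exact ⟨x + s, ⟨by linarith [hx.1], h⟩, by simp [abs_of_pos hs]⟩
    · exact ⟨x - s, ⟨by linarith, by linarith [hx.2]⟩, by simp [abs_of_pos hs]⟩
  have hchord := abs_mul_norm_sub_le_of_lipschitzOnWith (convex_Icc a b) hg hg' (hf i) hi
    (fun y hy => (dist_eq_norm (g y) (f i y) ▸ hclose y hy).le) hx hu
  rw [hux, ← sq_abs (u - x), hux] at hchord
  rw [dist_eq_norm]
  refine lt_of_mul_lt_mul_left ?_ hs.le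
  nlinarith [mul_lt_mul_of_pos_left hsK hs]

end

namespace Curves

variable {a b : ℝ}

theorem norm_tangent (γ : C1Curve a b) {t : ℝ} (ht : t ∈ Icc a b) : ‖tangent γ t‖ = 1 := by
  rw [tangent, norm_smul, norm_inv, norm_norm,
    inv_mul_cancel₀ (norm_ne_zero_iff.2 (γ.regular t ht))]

theorem norm_normal_le_one (γ : C1Curve a b) {t : ℝ} (ht : t ∈ Icc a b) : ‖normal γ t‖ ≤ 1 := by
  simpa [normal, γ.mem_sphere t ht, norm_tangent γ ht] using
    norm_cross_le (γ.toFun t) (tangent γ t)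

theorem ConstantSpeed.clength_pos {γ : C1Curve a b} (hγ : ConstantSpeed γ) (hab : a ≤ b) :
    0 < clength γ :=
  hγ a (left_mem_Icc.2 hab) ▸ norm_pos_iff.2 (γ.regular a (left_mem_Icc.2 hab))

theorem ConstantSpeed.deriv_eq_smul_tangent {γ : C1Curve a b} (hγ : ConstantSpeed γ) {t : ℝ}
    (ht : t ∈ Icc a b) : γ.deriv t = clength γ • tangent γ t := by
  rw [tangent, ← hγ t ht, smul_inv_smul₀ (norm_ne_zero_iff.2 (γ.regular t ht))]

theorem ConstantSpeed.lipschitzOnWith_toFun {γ : C1Curve a b} (hγ : ConstantSpeed γ) :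
    LipschitzOnWith (clength γ).toNNReal γ.toFun (Icc a b) :=
  (convex_Icc a b).lipschitzOnWith_of_nnnorm_hasDerivWithin_le γ.hasDeriv fun t ht => by
    rw [← NNReal.coe_le_coe, coe_nnnorm, hγ t ht]
    exact Real.le_coe_toNNReal _

theorem norm_toFun_sub_le_d0 (α β : C1Curve 0 1) {t : ℝ} (ht : t ∈ Icc (0 : ℝ) 1) :
    ‖α.toFun t - β.toFun t‖ ≤ d0 α β :=
  (norm_sub_le_sdist (α.mem_sphere t ht) (β.mem_sphere t ht)).trans <|
    le_ciSup (f := fun t : Icc (0 : ℝ) 1 => sdist (α.toFun t) (β.toFun t))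
      ⟨π, by rintro _ ⟨r, rfl⟩; exact arccos_le_pi _⟩ ⟨t, ht⟩

theorem tendstoUniformlyOn_toFun_of_tendsto_d0 {ι : Type*} {l : Filter ι} {A : ι → C1Curve 0 1}
    {α : C1Curve 0 1} (hA : Tendsto (fun i => d0 (A i) α) l (𝓝 0)) :
    TendstoUniformlyOn (fun i => (A i).toFun) α.toFun l (Icc 0 1) := by
  rw [Metric.tendstoUniformlyOn_iff]
  intro ε hε
  filter_upwards [hA.eventually (gt_mem_nhds hε)] with i hi t ht
  rw [dist_eq_norm, norm_sub_rev]
  exact (norm_toFun_sub_le_d0 (A i) α ht).trans_lt hi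

theorem MemP.exists_isCurvature_abs_le {κ₁ κ₂ : ℝ} {P Q : Matrix (Fin 3) (Fin 3) ℝ}
    {γ : C1Curve 0 1} (hγ : MemP κ₁ κ₂ P Q γ) :
    ∃ κ, IsCurvature γ κ ∧ ∀ᵐ t ∂μ01, |κ t| ≤ max |κ₁| |κ₂| := by
  obtain ⟨-, -, κ, hκ, hinf, -, hsup⟩ := hγ
  refine ⟨κ, hκ, ?_⟩
  filter_upwards [ae_essInf_le (f := fun t => ((κ t : ℝ) : EReal)),
    ae_le_essSup (f := fun t => ((κ t : ℝ) : EReal))] with t hinf_le hle_sup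
  have h₁ := EReal.coe_lt_coe_iff.1 (hinf.trans_le hinf_le)
  have h₂ := EReal.coe_lt_coe_iff.1 (hle_sup.trans_lt hsup)
  rw [abs_le]
  constructor <;> linarith [neg_abs_le κ₁, le_abs_self κ₂, le_max_left |κ₁| |κ₂|,
    le_max_right |κ₁| |κ₂|]

theorem ConstantSpeed.lipschitzOnWith_deriv {κ₁ κ₂ : ℝ} {P Q : Matrix (Fin 3) (Fin 3) ℝ}
    {γ : C1Curve 0 1} (hγ : ConstantSpeed γ) (hm : MemP κ₁ κ₂ P Q γ) :
    LipschitzOnWith (clength γ ^ 2 * (1 + max |κ₁| |κ₂|)).toNNReal γ.deriv (Icc 0 1) := by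
  obtain ⟨K, hK⟩ := hm.2.1
  obtain ⟨κ, ⟨-, hκ⟩, hκM⟩ := hm.exists_isCurvature_abs_le
  set L := clength γ
  have hL := (hγ.clength_pos zero_le_one).le
  refine hK.of_ae_hasDerivWithinAt_norm_le
    (g' := fun t => L • (‖γ.deriv t‖ • (-(γ.toFun t) + κ t • normal γ t))) ?_
  filter_upwards [hκ, hκM, ae_restrict_mem measurableSet_Icc] with t hκt hκMt ht
  refine ⟨(hκt.const_smul L).congr (fun s hs => hγ.deriv_eq_smul_tangent hs)
    (hγ.deriv_eq_smul_tangent ht), ?_⟩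
  have hv : ‖-(γ.toFun t) + κ t • normal γ t‖ ≤ 1 + max |κ₁| |κ₂| := by
    calc ‖-(γ.toFun t) + κ t • normal γ t‖ ≤ ‖γ.toFun t‖ + |κ t| * ‖normal γ t‖ := by
          simpa [norm_smul] using norm_add_le (-(γ.toFun t)) (κ t • normal γ t)
      _ ≤ 1 + max |κ₁| |κ₂| * 1 := by
          rw [γ.mem_sphere t ht]
          gcongr
          exact norm_normal_le_one γ ht
      _ = 1 + max |κ₁| |κ₂| := by rw [mul_one]
  rw [Real.coe_toNNReal _ (by positivity), norm_smul, norm_smul, norm_norm, hγ t ht,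
    Real.norm_of_nonneg hL, sq, mul_assoc]
  gcongr

theorem clength_le_of_d0_le_s13 {κ₁ κ₂ : ℝ} {P Q : Matrix (Fin 3) (Fin 3) ℝ} {γ α : C1Curve 0 1}
    (hγ : ConstantSpeed γ) (hm : MemP κ₁ κ₂ P Q γ) (hα : ConstantSpeed α)
    (hd : d0 γ α ≤ 1 / (16 * (1 + max |κ₁| |κ₂|))) :
    clength γ ≤ max (4 * clength α) (1 / (2 * (1 + max |κ₁| |κ₂|))) := by
  set M := 1 + max |κ₁| |κ₂|
  set L := clength γ
  have hM : 0 < M := by positivity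
  rcases le_or_gt L (1 / (2 * M)) with hsmall | hlarge
  · exact le_max_of_le_right hsmall
  refine le_max_of_le_left ?_
  have hL : 0 < L := lt_trans (by positivity) hlarge
  have hLM : 1 < 2 * L * M := by rw [div_lt_iff₀ (by positivity)] at hlarge; linarith
  -- Up to time `u` the quadratic error of `γ` is half its linear displacement `u * L`.
  set u := 1 / (2 * L * M)
  have hu₀ : 0 < u := by positivity
  have hu : u ∈ Icc (0 : ℝ) 1 := ⟨hu₀.le, (div_le_one (by positivity)).2 hLM.le⟩
  have h0 : (0 : ℝ) ∈ Icc (0 : ℝ) 1 := left_mem_Icc.2 zero_le_one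
  have huLM : u * L * M = 1 / 2 := by simp only [u]; field_simp
  have hchord : ‖γ.toFun u - γ.toFun 0 - u • γ.deriv 0‖ ≤ u * L / 2 := by
    have := norm_sub_sub_smul_le_of_lipschitzOnWith (convex_Icc 0 1) γ.hasDeriv
      (hγ.lipschitzOnWith_deriv hm) h0 hu
    rw [Real.coe_toNNReal _ (by positivity), sub_zero] at this
    refine this.trans_eq ?_
    linear_combination u * L * huLM
  have hfar : u * L / 2 ≤ ‖γ.toFun u - γ.toFun 0‖ := by
    have hlin : ‖u • γ.deriv 0‖ = u * L := by rw [norm_smul, Real.norm_of_nonneg hu₀.le, hγ 0 h0]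
    linarith [norm_sub_norm_le (u • γ.deriv 0) (γ.toFun u - γ.toFun 0),
      norm_sub_rev (u • γ.deriv 0) (γ.toFun u - γ.toFun 0)]
  have hnear : ‖γ.toFun u - γ.toFun 0‖ ≤ 2 * d0 γ α + clength α * u := by
    have hαu := hα.lipschitzOnWith_toFun.dist_le_mul u hu 0 h0
    rw [dist_eq_norm, Real.dist_eq, sub_zero, abs_of_nonneg hu₀.le,
      Real.coe_toNNReal _ (hα.clength_pos zero_le_one).le] at hαu
    have hsplit : γ.toFun u - γ.toFun 0 =
        (γ.toFun u - α.toFun u) + (α.toFun u - α.toFun 0) - (γ.toFun 0 - α.toFun 0) := by abel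
    rw [hsplit]
    linarith [norm_sub_le ((γ.toFun u - α.toFun u) + (α.toFun u - α.toFun 0))
        (γ.toFun 0 - α.toFun 0), norm_add_le (γ.toFun u - α.toFun u) (α.toFun u - α.toFun 0),
      norm_toFun_sub_le_d0 γ α hu, norm_toFun_sub_le_d0 γ α h0]
  have hclose : 2 * d0 γ α ≤ u * L / 4 := by
    have : u * L = 1 / (2 * M) := by field_simp; linear_combination 2 * huLM
    rw [this]
    calc 2 * d0 γ α ≤ 2 * (1 / (16 * M)) := by gcongr
      _ = 1 / (2 * M) / 4 := by field_simp; ring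
  refine le_of_mul_le_mul_left ?_ hu₀
  linarith

theorem stmt_13_general (κ₁ κ₂ : ℝ) (P Q : SO3)
    (A : ℕ → C1Curve 0 1) (α₀ : C1Curve 0 1)
    (hA : ∀ k, ConstantSpeed (A k) ∧
      MemP κ₁ κ₂ (P : Matrix (Fin 3) (Fin 3) ℝ) (Q : Matrix (Fin 3) (Fin 3) ℝ) (A k))
    (hα : ConstantSpeed α₀ ∧
      MemP κ₁ κ₂ (P : Matrix (Fin 3) (Fin 3) ℝ) (Q : Matrix (Fin 3) (Fin 3) ℝ) α₀)
    (hconv : Filter.Tendsto (fun k => d0 (A k) α₀) Filter.atTop (𝓝 0)) :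
    TendstoUniformlyOn (fun k t => (A k).deriv t) (fun t => α₀.deriv t)
      Filter.atTop (Set.Icc (0:ℝ) 1) := by
  obtain ⟨hcs₀, hm₀⟩ := hα
  set M := 1 + max |κ₁| |κ₂|
  set B := max (4 * clength α₀) (1 / (2 * M))
  have hlip : ∀ γ : C1Curve 0 1, ConstantSpeed γ → MemP κ₁ κ₂ P Q γ → clength γ ≤ B →
      LipschitzOnWith (B ^ 2 * M).toNNReal γ.deriv (Icc 0 1) := fun γ hγ hm hB =>
    (hγ.lipschitzOnWith_deriv hm).weaken <| Real.toNNReal_le_toNNReal <| by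
      have := (hγ.clength_pos zero_le_one).le
      gcongr
  have hlen : ∀ᶠ k in atTop, clength (A k) ≤ B :=
    (hconv.eventually (ge_mem_nhds (by positivity))).mono fun k hk =>
      clength_le_of_d0_le_s13 (hA k).1 (hA k).2 hcs₀ hk
  have hB₀ : clength α₀ ≤ B :=
    le_max_of_le_left (by linarith [(hcs₀.clength_pos zero_le_one).le])
  exact tendstoUniformlyOn_deriv_of_lipschitzOnWith zero_lt_one (fun k => (A k).hasDeriv)
    (hlen.mono fun k hk => hlip _ (hA k).1 (hA k).2 hk) α₀.hasDeriv (hlip α₀ hcs₀ hm₀ hB₀)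
    (tendstoUniformlyOn_toFun_of_tendsto_d0 hconv)

/-- if `α_k, α₀ ∈ 𝓟_{κ₁}^{κ₂}(P,Q)` are parametrized with constant speed and
`d⁰(α_k, α₀) → 0`, then `α̇_k → α̇₀` uniformly on `[0,1]`. -/
theorem stmt_13 (κ₁ κ₂ : ℝ) (h12 : κ₁ < κ₂) (P Q : SO3)
    (A : ℕ → C1Curve 0 1) (α₀ : C1Curve 0 1)
    (hA : ∀ k, ConstantSpeed (A k) ∧
      MemP κ₁ κ₂ (P : Matrix (Fin 3) (Fin 3) ℝ) (Q : Matrix (Fin 3) (Fin 3) ℝ) (A k))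
    (hα : ConstantSpeed α₀ ∧
      MemP κ₁ κ₂ (P : Matrix (Fin 3) (Fin 3) ℝ) (Q : Matrix (Fin 3) (Fin 3) ℝ) α₀)
    (hconv : Filter.Tendsto (fun k => d0 (A k) α₀) Filter.atTop (𝓝 0)) :
    TendstoUniformlyOn (fun k t => (A k).deriv t) (fun t => α₀.deriv t)
      Filter.atTop (Set.Icc (0:ℝ) 1) :=
  stmt_13_general κ₁ κ₂ P Q A α₀ hA hα hconv

end Curves
end
end
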